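/- arXiv:1508.03709 — 12 statements merged into one kernel-verified Lean document; each statement's English description precedes it below -/
import Mathlib

section
/- Let L ⊆ [0,1]^S contain 0 and e, be closed under f ↦ e−f, and satisfy the orthogonality postulate (a sequence is orthogonal iff pairwise orthogonal). Then L, with the pointwise order and complementation f⊥ = e−f, is an orthomodular partially ordered set: for f ≤ g in L, g = f ∨ (g ∧ f⊥), where joins of orthogonal elements are given by sums. -/
/-- Mączynski: Under the orthogonality postulate, `L` with the pointwise
order and complementation `f⊥ = e - f` is orthomodular: for `f ≤ g` in `L`, the element
`g - f` belongs to `L`, it is the greatest lower bound `g ∧ f⊥` in `L`, and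
`g = f + (g - f)` is the least upper bound (join) of the orthogonal pair `f, g - f`,
i.e. `g = f ∨ (g ∧ f⊥)`. -/
theorem stmt_1 (S : Type*) (L : Set (S → ℝ))
    (hbound : ∀ f ∈ L, ∀ α, 0 ≤ f α ∧ f α ≤ 1)
    (h0 : (fun _ => (0 : ℝ)) ∈ L)
    (he : (fun _ => (1 : ℝ)) ∈ L)
    (hcompl : ∀ f ∈ L, (fun α => 1 - f α) ∈ L)
    (hpost : ∀ f : ℕ → (S → ℝ), (∀ i, f i ∈ L) →
      ((∃ g ∈ L, ∀ α, g α + ∑' i, f i α = 1) ↔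
        (∀ i j, i ≠ j → ∀ α, f i α + f j α ≤ 1))) :
    ∀ f ∈ L, ∀ g ∈ L, (∀ α, f α ≤ g α) →
      -- `g - f` lies in `L`
      (fun α => g α - f α) ∈ L ∧
      -- `g - f` is the greatest lower bound of `g` and `f⊥ = e - f` in `L`
      ((∀ α, g α - f α ≤ g α) ∧ (∀ α, g α - f α ≤ 1 - f α) ∧
        ∀ h ∈ L, (∀ α, h α ≤ g α) → (∀ α, h α ≤ 1 - f α) →
          ∀ α, h α ≤ g α - f α) ∧
      -- `g = f + (g - f)` is the least upper bound of `f` and `g - f` in `L`: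
      -- `g = f ∨ (g ∧ f⊥)`
      ((∀ α, g α = f α + (g α - f α)) ∧
        (∀ α, f α ≤ g α) ∧ (∀ α, g α - f α ≤ g α) ∧
        ∀ h ∈ L, (∀ α, f α ≤ h α) → (∀ α, g α - f α ≤ h α) →
          ∀ α, g α ≤ h α) := by
  -- key lemma: three pairwise orthogonal elements have a "completion" in L
  have key : ∀ a ∈ L, ∀ b ∈ L, ∀ c ∈ L,
      (∀ α, a α + b α ≤ 1) → (∀ α, a α + c α ≤ 1) → (∀ α, b α + c α ≤ 1) →
      ∃ m ∈ L, ∀ α, m α + (a α + b α + c α) = 1 := by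
    intro a ha b hb c hc hab hac hbc
    set F : ℕ → S → ℝ := fun i =>
      if i = 0 then a else if i = 1 then b else if i = 2 then c else fun _ => 0 with hF
    have e0 : F 0 = a := by simp [hF]
    have e1 : F 1 = b := by simp [hF]
    have e2 : F 2 = c := by simp [hF]
    have e3 : ∀ n, F (n + 3) = fun _ => 0 := by intro n; simp [hF]
    have hmem : ∀ i, F i ∈ L := by
      intro i
      rcases i with _ | _ | _ | i
      · rwa [e0]
      · rwa [e1]
      · rwa [e2]
      · rw [e3]; exact h0
    have hpair : ∀ i j, i ≠ j → ∀ α, F i α + F j α ≤ 1 := by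
      intro i j hij α
      have ba := hbound a ha α
      have bb := hbound b hb α
      have bc := hbound c hc α
      rcases i with _ | _ | _ | i <;> rcases j with _ | _ | _ | j <;>
        first
          | exact absurd rfl hij
          | (simp only [e0, e1, e2, e3] ;
             linarith [hab α, hac α, hbc α, ba.1, ba.2, bb.1, bb.2, bc.1, bc.2])
    obtain ⟨m, hm, hsum⟩ := (hpost F hmem).mpr hpair
    refine ⟨m, hm, fun α => ?_⟩
    have hts : ∑' i, F i α = a α + b α + c α := by
      rw [tsum_eq_sum (s := Finset.range 3) (by
        intro i hi
        rcases i with _ | _ | _ | i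
        · simp at hi
        · simp at hi
        · simp at hi
        · rw [e3])]
      simp [Finset.sum_range_succ, e0, e1, e2]
    have := hsum α
    rw [hts] at this
    exact this
  intro f hf g hg hfg
  have bf := hbound f hf
  have bg := hbound g hg
  -- membership of g - f
  have hmemgf : (fun α => g α - f α) ∈ L := by
    obtain ⟨m, hm, hsum⟩ := key f hf (fun α => 1 - g α) (hcompl g hg)
      (fun _ => (0 : ℝ)) h0
      (fun α => show f α + (1 - g α) ≤ 1 by linarith [hfg α])
      (fun α => show f α + 0 ≤ 1 by linarith [(bf α).2])
      (fun α => show (1 - g α) + 0 ≤ 1 by linarith [(bg α).1])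
    have : (fun α => g α - f α) = m := funext fun α => by
      have h1 : m α + (f α + (1 - g α) + 0) = 1 := hsum α
      linarith
    rw [this]; exact hm
  refine ⟨hmemgf, ⟨fun α => by linarith [(bf α).1], fun α => by linarith [(bg α).2],
    ?_⟩, ⟨fun α => by ring, hfg, fun α => by linarith [(bf α).1], ?_⟩⟩
  · -- glb maximality
    intro h hh hhg hhf α
    obtain ⟨m, hm, hsum⟩ := key h hh f hf (fun α => 1 - g α) (hcompl g hg)
      (fun α => show h α + f α ≤ 1 by linarith [hhf α])
      (fun α => show h α + (1 - g α) ≤ 1 by linarith [hhg α])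
      (fun α => show f α + (1 - g α) ≤ 1 by linarith [hfg α])
    have h1 : m α + (h α + f α + (1 - g α)) = 1 := hsum α
    have h0m := (hbound m hm α).1
    linarith
  · -- lub minimality
    intro h hh hfh hgfh α
    obtain ⟨m, hm, hsum⟩ := key (fun α => g α - f α) hmemgf f hf
      (fun α => 1 - h α) (hcompl h hh)
      (fun α => show (g α - f α) + f α ≤ 1 by linarith [(bg α).2])
      (fun α => show (g α - f α) + (1 - h α) ≤ 1 by linarith [hgfh α])
      (fun α => show f α + (1 - h α) ≤ 1 by linarith [hfh α])
    have h1 : m α + ((g α - f α) + f α + (1 - h α)) = 1 := hsum α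
    have h0m := (hbound m hm α).1
    linarith
end

section
/- Let L be a separable orthomodular σ-orthocomplete orthocomplemented lattice whose set of states S (probability measures on L) contains a sufficient set of pure states (for every nonzero a∈L there is a state α with α(a)=1) and satisfies the Jauch–Piron property. Then every state α ∈ S has a support s(α) ∈ L: a smallest element a with α(a)=1, characterized by α(x)=0 ⟺ x ≤ s(α)⊥. -/
/-- A state (σ-additive probability measure) on a complete lattice `L` with an
orthocomplementation `compl`. -/
structure QState {L : Type*} [CompleteLattice L] (compl : L → L) where
  val : L → ℝ
  nonneg : ∀ a, 0 ≤ val a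
  le_one : ∀ a, val a ≤ 1
  val_top : val ⊤ = 1
  sigma_additive : ∀ a : ℕ → L, (∀ i j, i ≠ j → a i ≤ compl (a j)) →
    val (⨆ i, a i) = ∑' i, val (a i)

/-- In a separable orthomodular σ-orthocomplete orthocomplemented lattice
whose states contain a sufficient set of pure states and satisfy the Jauch–Piron
property, every state `α` has a support `s(α)`: a smallest element of value 1,
characterized by `α(x) = 0 ↔ x ≤ s(α)⊥`. -/
theorem stmt_3 (L : Type*) [CompleteLattice L] (compl : L → L)
    (hinv : ∀ a, compl (compl a) = a)
    (hanti : ∀ a b : L, a ≤ b → compl b ≤ compl a)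
    (hjoin : ∀ a : L, a ⊔ compl a = ⊤)
    (hmeet : ∀ a : L, a ⊓ compl a = ⊥)
    (horthomodular : ∀ a b : L, a ≤ b → b = a ⊔ (b ⊓ compl a))
    (hsep : ∀ A : Set L, (∀ a ∈ A, ∀ b ∈ A, a ≠ b → a ≤ compl b) → A.Countable)
    (Pure : Set (QState compl))
    (hsuff : ∀ a : L, a ≠ ⊥ → ∃ α ∈ Pure, α.val a = 1)
    (hJP : ∀ α : QState compl, ∀ a b : L, α.val a = 1 → α.val b = 1 →
      ∃ c : L, c ≤ a ∧ c ≤ b ∧ α.val c = 1) :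
    ∀ α : QState compl, ∃ s : L, α.val s = 1 ∧
      (∀ b : L, α.val b = 1 → s ≤ b) ∧
      (∀ x : L, α.val x = 0 ↔ x ≤ compl s) := by
  intro α
  classical
  have hcbot : compl (⊥ : L) = ⊤ := by
    have := hjoin (⊥ : L)
    simpa using this
  -- α ⊥ = 0
  have hbot : α.val ⊥ = 0 := by
    have horth : ∀ i j : ℕ, i ≠ j → (fun _ : ℕ => (⊥ : L)) i ≤ compl ((fun _ : ℕ => (⊥ : L)) j) := by
      intro i j _; simp
    have h := α.sigma_additive (fun _ => ⊥) horth
    simp only [iSup_const] at h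
    by_contra hc
    have hns : ¬ Summable (fun _ : ℕ => α.val ⊥) := by
      rw [summable_const_iff]; exact hc
    rw [tsum_eq_zero_of_not_summable hns] at h
    exact hc h
  -- finite additivity for an orthogonal pair
  have hadd : ∀ a b : L, a ≤ compl b → α.val (a ⊔ b) = α.val a + α.val b := by
    intro a b hab
    have hba : b ≤ compl a := by
      have := hanti a (compl b) hab
      rwa [hinv] at this
    set g : ℕ → L := fun n => if n = 0 then a else if n = 1 then b else ⊥ with hg
    have horth : ∀ i j : ℕ, i ≠ j → g i ≤ compl (g j) := by
      intro i j hij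
      rcases Nat.eq_zero_or_pos i with hi | hi
      · rcases Nat.eq_zero_or_pos j with hj | hj
        · exact absurd (hi.trans hj.symm) hij
        · by_cases hj1 : j = 1
          · simp [hg, hi, hj1, hab]
          · simp [hg, hi, Nat.pos_iff_ne_zero.mp hj, hj1, hcbot]
      · have hi0 : i ≠ 0 := Nat.pos_iff_ne_zero.mp hi
        by_cases hi1 : i = 1
        · rcases Nat.eq_zero_or_pos j with hj | hj
          · simp [hg, hi1, hj, hba]
          · have hj1 : j ≠ 1 := by rintro rfl; exact hij (hi1.trans rfl)
            simp [hg, hi1, Nat.pos_iff_ne_zero.mp hj, hj1, hcbot]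
        · simp [hg, hi0, hi1]
    have hsup : (⨆ i, g i) = a ⊔ b := by
      apply le_antisymm
      · apply iSup_le
        intro i
        by_cases hi0 : i = 0
        · simp [hg, hi0]
        · by_cases hi1 : i = 1
          · simp [hg, hi0, hi1]
          · simp [hg, hi0, hi1]
      · apply sup_le
        · have : g 0 ≤ ⨆ i, g i := le_iSup g 0
          simpa [hg] using this
        · have : g 1 ≤ ⨆ i, g i := le_iSup g 1
          simpa [hg] using this
    have h := α.sigma_additive g horth
    rw [hsup] at h
    have htsum : (∑' i, α.val (g i)) = ∑ i ∈ ({0, 1} : Finset ℕ), α.val (g i) := by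
      apply tsum_eq_sum
      intro i hi
      simp only [Finset.mem_insert, Finset.mem_singleton, not_or] at hi
      simp [hg, hi.1, hi.2, hbot]
    rw [htsum] at h
    rw [h]
    norm_num [hg]
  -- monotonicity
  have hmono : ∀ x y : L, x ≤ y → α.val x ≤ α.val y := by
    intro x y hxy
    have h1 : x ≤ compl (y ⊓ compl x) := by
      have := hanti (y ⊓ compl x) (compl x) inf_le_right
      rwa [hinv] at this
    have h2 : α.val y = α.val x + α.val (y ⊓ compl x) := by
      conv_lhs => rw [horthomodular x y hxy]
      exact hadd x (y ⊓ compl x) h1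
    have := α.nonneg (y ⊓ compl x)
    linarith
  -- complement value
  have hcompl : ∀ a : L, α.val (compl a) = 1 - α.val a := by
    intro a
    have h1 : a ≤ compl (compl a) := by rw [hinv]
    have h := hadd a (compl a) h1
    rw [hjoin, α.val_top] at h
    linarith
  -- Zorn's lemma: maximal orthogonal family of null elements
  set C : Set (Set L) :=
    {T | (∀ t ∈ T, α.val t = 0) ∧ ∀ a ∈ T, ∀ b ∈ T, a ≠ b → a ≤ compl b} with hC
  obtain ⟨M, hMmax⟩ : ∃ M, Maximal (· ∈ C) M := by
    apply zorn_subset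
    intro c hcC hchain
    refine ⟨⋃₀ c, ⟨?_, ?_⟩, fun s hs => le_sSup hs⟩
    · rintro t ⟨T, hT, htT⟩
      exact (hcC hT).1 t htT
    · rintro a ⟨T, hT, haT⟩ b ⟨T', hT', hbT'⟩ hab
      rcases hchain.total hT hT' with h | h
      · exact (hcC hT').2 a (h haT) b hbT' hab
      · exact (hcC hT).2 a haT b (h hbT') hab
  have hMC : M ∈ C := hMmax.1
  have hMc : M.Countable := hsep M hMC.2
  -- enumerate M (padded with ⊥)
  obtain ⟨f, hf⟩ := Set.countable_iff_exists_injective.mp hMc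
  set g : ℕ → L := fun n => if h : ∃ m : M, f m = n then (Classical.choose h).1 else ⊥
    with hgdef
  have hgpos : ∀ (n : ℕ) (h : ∃ m : M, f m = n), g n = (Classical.choose h).1 :=
    fun n h => dif_pos h
  have hgneg : ∀ n : ℕ, (¬∃ m : M, f m = n) → g n = ⊥ := fun n h => dif_neg h
  have hgmem : ∀ n, g n = ⊥ ∨ g n ∈ M := by
    intro n
    by_cases h : ∃ m : M, f m = n
    · right; rw [hgpos n h]; exact (Classical.choose h).2
    · left; exact hgneg n h
  have hgval : ∀ m : M, g (f m) = m := by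
    intro m
    have h : ∃ m' : M, f m' = f m := ⟨m, rfl⟩
    have hch : f (Classical.choose h) = f m := Classical.choose_spec h
    have heq : Classical.choose h = m := hf hch
    rw [hgpos (f m) h, heq]
  have hgorth : ∀ i j : ℕ, i ≠ j → g i ≤ compl (g j) := by
    intro i j hij
    by_cases hj : g j = ⊥
    · rw [hj, hcbot]; exact le_top
    · by_cases hi : g i = ⊥
      · rw [hi]; exact bot_le
      · have hexi : ∃ m : M, f m = i := by
          by_contra h; exact hi (hgneg i h)
        have hexj : ∃ m : M, f m = j := by
          by_contra h; exact hj (hgneg j h)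
        have hgi : g i = (Classical.choose hexi).1 := hgpos i hexi
        have hgj : g j = (Classical.choose hexj).1 := hgpos j hexj
        have hne : g i ≠ g j := by
          intro heq
          have : Classical.choose hexi = Classical.choose hexj :=
            Subtype.ext (by rw [← hgi, ← hgj, heq])
          have hfij : i = j := by
            rw [← Classical.choose_spec hexi, ← Classical.choose_spec hexj, this]
          exact hij hfij
        exact hMC.2 (g i) (by rw [hgi]; exact (Classical.choose hexi).2)
          (g j) (by rw [hgj]; exact (Classical.choose hexj).2) hne
  set b : L := ⨆ n, g n with hb
  have hgnull : ∀ n, α.val (g n) = 0 := by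
    intro n
    rcases hgmem n with h | h
    · rw [h, hbot]
    · exact hMC.1 _ h
  have hbnull : α.val b = 0 := by
    have h := α.sigma_additive g hgorth
    rw [← hb] at h
    rw [h]
    simp [hgnull]
  have hMle : ∀ m ∈ M, m ≤ b := by
    intro m hm
    have : g (f ⟨m, hm⟩) = m := hgval ⟨m, hm⟩
    rw [← this]
    exact le_iSup g _
  -- key claim: every null element is ≤ b
  have hkey : ∀ x : L, α.val x = 0 → x ≤ b := by
    intro x hx
    have hc1 : α.val (compl x) = 1 := by rw [hcompl, hx]; ring
    have hc2 : α.val (compl b) = 1 := by rw [hcompl, hbnull]; ring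
    obtain ⟨c, hcx, hcb, hc⟩ := hJP α (compl x) (compl b) hc1 hc2
    have hxc : x ≤ compl c := by
      have := hanti c (compl x) hcx; rwa [hinv] at this
    have hbc : b ≤ compl c := by
      have := hanti c (compl b) hcb; rwa [hinv] at this
    have hcc0 : α.val (compl c) = 0 := by rw [hcompl, hc]; ring
    set d : L := (x ⊔ b) ⊓ compl b with hd
    have hdcc : d ≤ compl c := le_trans inf_le_left (sup_le hxc hbc)
    have hd0 : α.val d = 0 := by
      have h1 := hmono d (compl c) hdcc
      have h2 := α.nonneg d
      linarith
    have hdbot : d = ⊥ := by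
      by_contra hdne
      -- insert d into M contradicts maximality
      have hdM : insert d M ∈ C := by
        constructor
        · intro t ht
          rcases ht with rfl | ht
          · exact hd0
          · exact hMC.1 t ht
        · intro a ha a' ha' hne
          rcases ha with rfl | ha
          · rcases ha' with rfl | ha'
            · exact absurd rfl hne
            · exact le_trans inf_le_right (hanti a' b (hMle a' ha'))
          · rcases ha' with rfl | ha'
            · have hda : d ≤ compl a :=
                le_trans inf_le_right (hanti a b (hMle a ha))
              have := hanti d (compl a) hda
              rwa [hinv] at this
            · exact hMC.2 a ha a' ha' hne
      have : insert d M ⊆ M := hMmax.2 hdM (Set.subset_insert d M)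
      have hdmem : d ∈ M := this (Set.mem_insert d M)
      have h1 : d ≤ b := hMle d hdmem
      have h2 : d ≤ compl b := inf_le_right
      have : d ≤ b ⊓ compl b := le_inf h1 h2
      rw [hmeet] at this
      exact hdne (le_bot_iff.mp this)
    have hsup : x ⊔ b = b := by
      have h := horthomodular b (x ⊔ b) le_sup_right
      rw [← hd, hdbot] at h
      simpa using h.symm
    calc x ≤ x ⊔ b := le_sup_left
      _ = b := hsup
  -- conclude
  refine ⟨compl b, ?_, ?_, ?_⟩
  · rw [hcompl, hbnull]; ring
  · intro y hy
    have hy0 : α.val (compl y) = 0 := by rw [hcompl, hy]; ring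
    have := hkey (compl y) hy0
    have := hanti (compl y) b this
    rwa [hinv] at this
  · intro x
    rw [hinv]
    constructor
    · exact hkey x
    · intro hxb
      have h1 := hmono x b hxb
      have h2 := α.nonneg x
      linarith
end

section
/- (Bugajska–Bugajski) Let L be a complete atomic orthomodular lattice whose atoms are exactly supports of pure states, and suppose the minimal-disturbance property holds: for pure α and a∈L with α(a)≠0 there exists a pure β with s(β) ≤ a and α(s(β)) = α(a). Then L has the covering property: for every atom p and every a ∈ L, (p ∨ a⊥) ∧ a is either an atom or 0. -/
/-- Bugajska–Bugajski: Let `L` be a complete atomic orthomodular lattice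
whose atoms are exactly the supports of pure states, with states additive on orthogonal
pairs, and suppose the minimal-disturbance property holds: for pure `α` and `a ∈ L` with
`α(a) ≠ 0` there is a pure `β` with `s(β) ≤ a` and `α(s(β)) = α(a)`. Then `L` has the
covering property: for every atom `p` and every `a ∈ L`, `(p ∨ a⊥) ∧ a` is an atom or `⊥`. -/
theorem stmt_6 (L : Type*) [CompleteLattice L] (compl : L → L)
    (hinv : ∀ a, compl (compl a) = a)
    (hanti : ∀ a b : L, a ≤ b → compl b ≤ compl a)
    (hjoin : ∀ a : L, a ⊔ compl a = ⊤)
    (hmeet : ∀ a : L, a ⊓ compl a = ⊥)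
    (horthomodular : ∀ a b : L, a ≤ b → b = a ⊔ (b ⊓ compl a))
    (hatomic : ∀ a : L, a ≠ ⊥ → ∃ p : L, IsAtom p ∧ p ≤ a)
    (States Pure : Set (L → ℝ)) (hPS : Pure ⊆ States)
    (hbound : ∀ α ∈ States, ∀ a : L, 0 ≤ α a ∧ α a ≤ 1)
    (hmono : ∀ α ∈ States, ∀ a b : L, a ≤ b → α a ≤ α b)
    (horthadd : ∀ α ∈ States, ∀ a b : L, a ≤ compl b → α (a ⊔ b) = α a + α b)
    (hcompladd : ∀ α ∈ States, ∀ a : L, α a + α (compl a) = 1)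
    (s : (L → ℝ) → L)
    (hsupp : ∀ α ∈ States, α (s α) = 1 ∧ ∀ b : L, α b = 1 → s α ≤ b)
    (hatoms : ∀ p : L, IsAtom p ↔ ∃ α ∈ Pure, s α = p)
    (hmindist : ∀ α ∈ Pure, ∀ a : L, α a ≠ 0 →
      ∃ β ∈ Pure, s β ≤ a ∧ α (s β) = α a) :
    ∀ (p a : L), IsAtom p → IsAtom ((p ⊔ compl a) ⊓ a) ∨ (p ⊔ compl a) ⊓ a = ⊥ := by
  -- De Morgan: compl of a meet is the join of compls
  have demorgan : ∀ x y : L, compl (x ⊓ y) = compl x ⊔ compl y := by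
    intro x y
    apply le_antisymm
    · have h1 : compl (compl x ⊔ compl y) ≤ x := by
        have := hanti _ _ (le_sup_left : compl x ≤ compl x ⊔ compl y)
        rwa [hinv] at this
      have h2 : compl (compl x ⊔ compl y) ≤ y := by
        have := hanti _ _ (le_sup_right : compl y ≤ compl x ⊔ compl y)
        rwa [hinv] at this
      have := hanti _ _ (le_inf h1 h2)
      rwa [hinv] at this
    · exact sup_le (hanti _ _ inf_le_left) (hanti _ _ inf_le_right)
  intro p a hp
  by_cases hpa : p ≤ compl a
  · right
    rw [sup_eq_right.mpr hpa, inf_comm, hmeet]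
  · left
    set q := (p ⊔ compl a) ⊓ a with hq
    -- q ≠ ⊥
    have hqbot : q ≠ ⊥ := by
      intro h
      have h1 : p ⊔ compl a = compl a ⊔ ((p ⊔ compl a) ⊓ compl (compl a)) :=
        horthomodular (compl a) (p ⊔ compl a) le_sup_right
      rw [hinv] at h1
      rw [← hq, h, sup_bot_eq] at h1
      exact hpa (le_trans le_sup_left h1.le)
    -- pure state with support p
    obtain ⟨α, hαP, hsα⟩ := (hatoms p).mp hp
    have hαS := hPS hαP
    have hαp : α p = 1 := by rw [← hsα]; exact (hsupp α hαS).1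
    have hαa : α a ≠ 0 := by
      intro h0
      have hca : α (compl a) = 1 := by
        have h := hcompladd α hαS a
        rwa [h0, zero_add] at h
      have := (hsupp α hαS).2 _ hca
      rw [hsα] at this
      exact hpa this
    obtain ⟨β, hβP, hrle, hαr⟩ := hmindist α hαP a hαa
    set r := s β with hr
    have hratom : IsAtom r := (hatoms r).mpr ⟨β, hβP, rfl⟩
    -- α (a ⊓ compl r) = 0
    have hom : a = r ⊔ (a ⊓ compl r) := horthomodular r a hrle
    have horth : r ≤ compl (a ⊓ compl r) := by
      have := hanti _ _ (inf_le_right : a ⊓ compl r ≤ compl r)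
      rwa [hinv] at this
    have hadd : α a = α r + α (a ⊓ compl r) := by
      conv_lhs => rw [hom]
      exact horthadd α hαS r (a ⊓ compl r) horth
    have hz : α (a ⊓ compl r) = 0 := by
      rw [hαr] at hadd
      exact left_eq_add.mp hadd
    have hzc : α (compl (a ⊓ compl r)) = 1 := by
      have h := hcompladd α hαS (a ⊓ compl r)
      rwa [hz, zero_add] at h
    have hple : p ≤ compl (a ⊓ compl r) := by
      have := (hsupp α hαS).2 _ hzc
      rwa [hsα] at this
    rw [demorgan, hinv] at hple
    -- hence q ≤ (r ⊔ compl a) ⊓ a = r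
    have hkey : (compl a ⊔ r) ⊓ a = r := by
      set x := (compl a ⊔ r) ⊓ a with hx
      have hrx : r ≤ x := le_inf le_sup_right hrle
      have h1 : x = r ⊔ (x ⊓ compl r) := horthomodular r x hrx
      have h2 : x ⊓ compl r ≤ (a ⊓ compl r) ⊓ compl (a ⊓ compl r) := by
        rw [demorgan, hinv]
        exact le_inf (le_inf (le_trans inf_le_left inf_le_right) inf_le_right)
          (le_trans inf_le_left inf_le_left)
      rw [hmeet] at h2
      rw [le_bot_iff.mp h2, sup_bot_eq] at h1
      exact h1
    have hqr : q ≤ r := by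
      rw [← hkey]
      exact inf_le_inf_right a (sup_le hple le_sup_left)
    rcases (hratom.le_iff.mp hqr) with h | h
    · exact absurd h hqbot
    · rw [h]; exact hratom
end

section
/- If an orthomodular lattice L has the property that for every two distinct pure states α, β there exists a third pure state γ ∉ {α,β} with s(γ) ≤ s(α) ∨ s(β) (superposition principle), and pure states biject with atoms via supports, then L is irreducible: its centre {c ∈ L | a = (a∧c) ∨ (a∧c⊥) for all a ∈ L} equals {0, 1}. -/
/-- If in a complete atomic orthomodular lattice `L`, pure states biject
with atoms via their supports, and the superposition principle holds (for any two
distinct pure states there is a third pure state, distinct from both, whose support is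
below the join of their supports), then `L` is irreducible: its centre is `{⊥, ⊤}`. -/
theorem stmt_7 (L : Type*) [CompleteLattice L] (compl : L → L)
    (hinv : ∀ a, compl (compl a) = a)
    (hanti : ∀ a b : L, a ≤ b → compl b ≤ compl a)
    (hjoin : ∀ a : L, a ⊔ compl a = ⊤)
    (hmeet : ∀ a : L, a ⊓ compl a = ⊥)
    (horthomodular : ∀ a b : L, a ≤ b → b = a ⊔ (b ⊓ compl a))
    (hatomic : ∀ a : L, a ≠ ⊥ → ∃ p : L, IsAtom p ∧ p ≤ a)
    (P : Type*) (s : P → L)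
    (hinj : Function.Injective s)
    (hsurj : ∀ a : L, IsAtom a ↔ ∃ α : P, s α = a)
    (hsuperpos : ∀ α β : P, α ≠ β → ∃ γ : P, γ ≠ α ∧ γ ≠ β ∧ s γ ≤ s α ⊔ s β) :
    ∀ c : L, (∀ a : L, a = (a ⊓ c) ⊔ (a ⊓ compl c)) → c = ⊥ ∨ c = ⊤ := by
  -- de Morgan: compl x ⊓ compl y ≤ compl (x ⊔ y)
  have hdm : ∀ x y : L, compl x ⊓ compl y ≤ compl (x ⊔ y) := by
    intro x y
    have hx : x ≤ compl (compl x ⊓ compl y) := by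
      have := hanti _ _ (inf_le_left : compl x ⊓ compl y ≤ compl x)
      rwa [hinv] at this
    have hy : y ≤ compl (compl x ⊓ compl y) := by
      have := hanti _ _ (inf_le_right : compl x ⊓ compl y ≤ compl y)
      rwa [hinv] at this
    have := hanti _ _ (sup_le hx hy)
    rwa [hinv] at this
  -- Key lemma: x ≤ d, y ≤ compl d → (x ⊔ y) ⊓ d = x
  have key : ∀ d x y : L, x ≤ d → y ≤ compl d → (x ⊔ y) ⊓ d = x := by
    intro d x y hx hy
    set z := (x ⊔ y) ⊓ d with hz
    have hxz : x ≤ z := le_inf le_sup_left hx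
    have hzeq := horthomodular x z hxz
    have hbot : z ⊓ compl x = ⊥ := by
      have h1 : z ⊓ compl x ≤ compl y := by
        calc z ⊓ compl x ≤ d := le_trans inf_le_left inf_le_right
        _ ≤ compl y := by
            have := hanti _ _ hy; rwa [hinv] at this
      have h2 : z ⊓ compl x ≤ compl (x ⊔ y) := by
        refine le_trans ?_ (hdm x y)
        exact le_inf inf_le_right h1
      have h3 : z ⊓ compl x ≤ x ⊔ y := le_trans inf_le_left inf_le_left
      have h4 : z ⊓ compl x ≤ (x ⊔ y) ⊓ compl (x ⊔ y) := le_inf h3 h2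
      rw [hmeet] at h4
      exact le_bot_iff.mp h4
    rw [hbot, sup_bot_eq] at hzeq
    exact hzeq
  intro c hc
  by_contra hne
  push_neg at hne
  obtain ⟨hcbot, hctop⟩ := hne
  -- compl c ≠ ⊥
  have hcomplbot : compl ⊥ = (⊤ : L) := by
    have := hjoin (⊥ : L); rwa [bot_sup_eq] at this
  have hcc : compl c ≠ ⊥ := by
    intro h
    apply hctop
    have := hinv c
    rw [h, hcomplbot] at this
    exact this.symm
  obtain ⟨p, hp, hpc⟩ := hatomic c hcbot
  obtain ⟨q, hq, hqc⟩ := hatomic (compl c) hcc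
  obtain ⟨α, hα⟩ := (hsurj p).mp hp
  obtain ⟨β, hβ⟩ := (hsurj q).mp hq
  have hαβ : α ≠ β := by
    intro h
    have hpq : p = q := by rw [← hα, ← hβ, h]
    have : p ≤ c ⊓ compl c := le_inf hpc (hpq ▸ hqc)
    rw [hmeet] at this
    exact hp.1 (le_bot_iff.mp this)
  obtain ⟨γ, hγα, hγβ, hγle⟩ := hsuperpos α β hαβ
  rw [hα, hβ] at hγle
  have hγatom : IsAtom (s γ) := (hsurj (s γ)).mpr ⟨γ, rfl⟩
  -- centrality of c on s γ
  have hdecomp := hc (s γ)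
  have hcases : s γ ≤ c ∨ s γ ≤ compl c := by
    rcases (hγatom.le_iff.mp (inf_le_left : s γ ⊓ c ≤ s γ)) with h1 | h1
    · rcases (hγatom.le_iff.mp (inf_le_left : s γ ⊓ compl c ≤ s γ)) with h2 | h2
      · exfalso
        rw [h1, h2, sup_bot_eq] at hdecomp
        exact hγatom.1 hdecomp
      · right; exact h2 ▸ inf_le_right
    · left; exact h1 ▸ inf_le_right
  rcases hcases with h | h
  · -- s γ ≤ (p ⊔ q) ⊓ c = p
    have : s γ ≤ p := by
      have := key c p q hpc hqc
      exact this ▸ le_inf hγle h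
    have hsp : s γ = p := (hp.le_iff.mp this).resolve_left hγatom.1
    exact hγα (hinj (hsp.trans hα.symm))
  · have hq2 : p ≤ compl (compl c) := by rwa [hinv]
    have : s γ ≤ q := by
      have := key (compl c) q p hqc hq2
      exact this ▸ le_inf (sup_comm p q ▸ hγle) h
    have hsq : s γ = q := (hq.le_iff.mp this).resolve_left hγatom.1
    exact hγβ (hinj (hsq.trans hβ.symm))
end

section
/- If in an orthomodular lattice L for every a ∉ {0,1} there exists b ∈ L with a ∧ b = 0 and a ≰ b⊥ (a and b complementary), then L is irreducible: Cent(L) = {0,1}. -/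
/-- If in an orthomodular lattice `L` every `a ∉ {⊥, ⊤}` admits a
complementary element `b` (i.e. `a ⊓ b = ⊥` but `a ≰ b⊥`), then `L` is irreducible:
its centre is `{⊥, ⊤}`. -/
theorem stmt_8 (L : Type*) [Lattice L] [BoundedOrder L] (compl : L → L)
    (hinv : ∀ a, compl (compl a) = a)
    (hanti : ∀ a b : L, a ≤ b → compl b ≤ compl a)
    (hjoin : ∀ a : L, a ⊔ compl a = ⊤)
    (hmeet : ∀ a : L, a ⊓ compl a = ⊥)
    (horthomodular : ∀ a b : L, a ≤ b → b = a ⊔ (b ⊓ compl a))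
    (hcompl_pairs : ∀ a : L, a ≠ ⊥ → a ≠ ⊤ →
      ∃ b : L, a ⊓ b = ⊥ ∧ ¬ a ≤ compl b) :
    ∀ c : L, (∀ a : L, a = (a ⊓ c) ⊔ (a ⊓ compl c)) → c = ⊥ ∨ c = ⊤ := by
  intro c hc
  by_contra h
  push_neg at h
  obtain ⟨b, hb1, hb2⟩ := hcompl_pairs c h.1 h.2
  have hbc : b ≤ compl c := by
    have := hc b
    rw [inf_comm b c, hb1, bot_sup_eq] at this
    exact this ▸ inf_le_right
  exact hb2 (by simpa [hinv] using hanti _ _ hbc)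
end

section
/- Let V be a Hermitian space over a division ring K with involutive antiautomorphism *, and f a Hermitian form. For any subset M ⊆ V, if the orthosymmetry extension ℓ̂ of a bijection ℓ₀ on one-dimensional subspaces preserving orthogonality is defined by ℓ̂(M) = {x ∈ ℓ₀([v]) | v ∈ M, v ≠ 0} ∪ {0}, then ℓ̂(M)⊥ = ℓ̂(M⊥) for every M, and ℓ̂ maps f-closed subspaces to f-closed subspaces. -/
/-- The orthogonal companion `M⊥ = {v | f(v,x) = 0 for all x ∈ M}`. -/
def perpSet {K V : Type*} [DivisionRing K] [AddCommGroup V] [Module K V]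
    (f : V → V → K) (M : Set V) : Set V :=
  {v | ∀ x ∈ M, f v x = 0}

/-- The line `[v] = Kv` through a vector `v`. -/
def lineOf (K : Type*) {V : Type*} [DivisionRing K] [AddCommGroup V] [Module K V]
    (v : V) : Set V :=
  Set.range fun c : K => c • v

/-- `L` is a line (one-dimensional subspace, an atom of `L_f(V)`). -/
def IsLine (K : Type*) {V : Type*} [DivisionRing K] [AddCommGroup V] [Module K V]
    (L : Set V) : Prop :=
  ∃ v : V, v ≠ 0 ∧ L = lineOf K v

/-- Orthogonality of two sets of vectors with respect to the form `f`. -/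
def perpL {K V : Type*} [DivisionRing K] [AddCommGroup V] [Module K V]
    (f : V → V → K) (L L' : Set V) : Prop :=
  ∀ x ∈ L, ∀ y ∈ L', f x y = 0

/-- The extension `ℓ̂(M) = {x ∈ ℓ₀([v]) | v ∈ M, v ≠ 0} ∪ {0}` of a map `ℓ₀` on lines. -/
def extMap (K : Type*) {V : Type*} [DivisionRing K] [AddCommGroup V] [Module K V]
    (ℓ₀ : Set V → Set V) (M : Set V) : Set V :=
  {x | ∃ v ∈ M, v ≠ 0 ∧ x ∈ ℓ₀ (lineOf K v)} ∪ {0}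

/-- For a Hermitian space `(V, K, *, f)` and an orthogonality-preserving
bijection `ℓ₀` of the lines, the extension `ℓ̂` satisfies `ℓ̂(M)⊥ = ℓ̂(M⊥)` for every
`M ⊆ V`, and `ℓ̂` maps `f`-closed subspaces to `f`-closed subspaces. -/
theorem stmt_11 {K V : Type*} [DivisionRing K] [StarRing K]
    [AddCommGroup V] [Module K V]
    (f : V → V → K)
    (hadd : ∀ u v w : V, f (u + v) w = f u w + f v w)
    (hsmul : ∀ (c : K) (u v : V), f (c • u) v = c * f u v)
    (hherm : ∀ u v : V, star (f u v) = f v u)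
    (hdefinite : ∀ v : V, f v v = 0 → v = 0)
    (ℓ₀ : Set V → Set V)
    (hbij : Set.BijOn ℓ₀ {L | IsLine K L} {L | IsLine K L})
    (hperp : ∀ L L' : Set V, IsLine K L → IsLine K L' →
      (perpL f L L' ↔ perpL f (ℓ₀ L) (ℓ₀ L'))) :
    (∀ M : Set V, perpSet f (extMap K ℓ₀ M) = extMap K ℓ₀ (perpSet f M)) ∧
      (∀ M : Set V, perpSet f (perpSet f M) = M →
        perpSet f (perpSet f (extMap K ℓ₀ M)) = extMap K ℓ₀ M) := by
  have hzl : ∀ v : V, f 0 v = 0 := by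
    intro v
    simpa using hsmul 0 v v
  have hzr : ∀ v : V, f v 0 = 0 := by
    intro v
    have h : star (f v 0) = 0 := by rw [hherm]; exact hzl v
    simpa using congrArg star h
  have hsr : ∀ (c : K) (u v : V), f u (c • v) = f u v * star c := by
    intro c u v
    have : star (f u (c • v)) = star (f u v * star c) := by
      rw [hherm, hsmul, star_mul, star_star, hherm]
    simpa using congrArg star this
  have hline : ∀ u v : V, f u v = 0 ↔ perpL f (lineOf K u) (lineOf K v) := by
    intro u v
    constructor
    · rintro h x ⟨c, rfl⟩ y ⟨d, rfl⟩
      simp only [hsmul, hsr, h, zero_mul, mul_zero]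
    · intro h
      simpa using h u ⟨1, one_smul K u⟩ v ⟨1, one_smul K v⟩
  have key : ∀ M : Set V, perpSet f (extMap K ℓ₀ M) = extMap K ℓ₀ (perpSet f M) := by
    intro M
    ext x
    constructor
    · intro hx
      by_cases hx0 : x = 0
      · exact Or.inr hx0
      · have hlx : lineOf K x ∈ {L | IsLine K L} := ⟨x, hx0, rfl⟩
        obtain ⟨L, hL, hLx⟩ := hbij.surjOn hlx
        obtain ⟨v, hv0, rfl⟩ := hL
        refine Or.inl ⟨v, ?_, hv0, ?_⟩
        · intro m hm
          by_cases hm0 : m = 0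
          · subst hm0; exact hzr v
          · have hperpx : perpL f (lineOf K x) (ℓ₀ (lineOf K m)) := by
              rintro a ⟨c, rfl⟩ b hb
              have hxb : f x b = 0 := hx b (Or.inl ⟨m, hm, hm0, hb⟩)
              rw [hsmul, hxb, mul_zero]
            rw [← hLx] at hperpx
            exact (hline v m).mpr
              ((hperp _ _ ⟨v, hv0, rfl⟩ ⟨m, hm0, rfl⟩).mpr hperpx)
        · rw [hLx]; exact ⟨1, one_smul K x⟩
    · rintro (⟨v, hvM, hv0, hxl⟩ | hx0)
      · rintro y (⟨m, hm, hm0, hyl⟩ | hy0)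
        · exact (hperp _ _ ⟨v, hv0, rfl⟩ ⟨m, hm0, rfl⟩).mp
            ((hline v m).mp (hvM m hm)) x hxl y hyl
        · rw [Set.mem_singleton_iff] at hy0
          subst hy0; exact hzr x
      · rw [Set.mem_singleton_iff] at hx0
        subst hx0; intro y _; exact hzl y
  refine ⟨key, fun M hM => ?_⟩
  rw [key, key, hM]
end

section
/- Every orthosymmetry ℓ₀ (orthogonality-preserving bijection of the atoms of L_f(V)) extends uniquely to a symmetry (order- and orthocomplementation-preserving bijection) of the lattice L_f(V) of f-closed subspaces, and the map ℓ₀ ↦ ℓ̂₀ is a group isomorphism from Aut_o(At(L_f(V))) onto Aut(L_f(V)). -/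
/-- The atoms of `L_f(V)`: the lines of `V`. -/
abbrev Atoms (K V : Type*) [DivisionRing K] [AddCommGroup V] [Module K V] : Type _ :=
  {L : Set V // IsLine K L}

/-- The lattice `L_f(V)` of `f`-closed subsets: `M = M⊥⊥`. -/
abbrev ClosedSub {K V : Type*} [DivisionRing K] [AddCommGroup V] [Module K V]
    (f : V → V → K) : Type _ :=
  {M : Set V // perpSet f (perpSet f M) = M}

/-- An orthosymmetry: a bijection of the atoms preserving orthogonality in both
directions. -/
def IsOrthoSym {K V : Type*} [DivisionRing K] [AddCommGroup V] [Module K V]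
    (f : V → V → K) (ℓ₀ : Atoms K V ≃ Atoms K V) : Prop :=
  ∀ L L' : Atoms K V, perpL f L.1 L'.1 ↔ perpL f (ℓ₀ L).1 (ℓ₀ L').1

/-- A symmetry of `L_f(V)`: an order- and orthocomplementation-preserving bijection. -/
def IsSym {K V : Type*} [DivisionRing K] [AddCommGroup V] [Module K V]
    (f : V → V → K) (ℓ : ClosedSub f ≃ ClosedSub f) : Prop :=
  (∀ M N : ClosedSub f, M.1 ⊆ N.1 ↔ (ℓ M).1 ⊆ (ℓ N).1) ∧
    (∀ M N : ClosedSub f, perpSet f M.1 = N.1 → perpSet f (ℓ M).1 = (ℓ N).1)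

namespace Stmt12Aux

variable {K V : Type*} [DivisionRing K] [StarRing K] [AddCommGroup V] [Module K V]

section basics
variable (f : V → V → K)

lemma f_zero_left (hadd : ∀ u v w : V, f (u + v) w = f u w + f v w) (x : V) :
    f 0 x = 0 := by
  have h := hadd 0 0 x
  rw [add_zero] at h
  exact left_eq_add.mp h

lemma f_zero_right (hadd : ∀ u v w : V, f (u + v) w = f u w + f v w)
    (hherm : ∀ u v : V, star (f u v) = f v u) (x : V) : f x 0 = 0 := by
  rw [← hherm 0 x, f_zero_left f hadd, star_zero]

lemma perp_anti {M N : Set V} (h : M ⊆ N) : perpSet f N ⊆ perpSet f M :=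
  fun v hv x hx => hv x (h hx)

lemma subset_biperp (hherm : ∀ u v : V, star (f u v) = f v u) (M : Set V) :
    M ⊆ perpSet f (perpSet f M) := fun v hv x hx => by
  rw [← hherm x v, hx v hv, star_zero]

lemma triple_perp (hherm : ∀ u v : V, star (f u v) = f v u) (M : Set V) :
    perpSet f (perpSet f (perpSet f M)) = perpSet f M :=
  Set.Subset.antisymm (perp_anti f (subset_biperp f hherm M))
    (subset_biperp f hherm (perpSet f M))

lemma zero_mem_perp (hadd : ∀ u v w : V, f (u + v) w = f u w + f v w) (A : Set V) :
    (0 : V) ∈ perpSet f A := fun x _ => f_zero_left f hadd x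

lemma smul_mem_perp (hsmul : ∀ (c : K) (u v : V), f (c • u) v = c * f u v)
    {A : Set V} {v : V} (hv : v ∈ perpSet f A) (c : K) : c • v ∈ perpSet f A :=
  fun x hx => by rw [hsmul, hv x hx, mul_zero]

lemma zero_mem_closed (hadd : ∀ u v w : V, f (u + v) w = f u w + f v w)
    {M : Set V} (hM : perpSet f (perpSet f M) = M) : (0 : V) ∈ M := by
  rw [← hM]; exact zero_mem_perp f hadd _

lemma smul_mem_closed (hsmul : ∀ (c : K) (u v : V), f (c • u) v = c * f u v)
    {M : Set V} (hM : perpSet f (perpSet f M) = M) {v : V} (hv : v ∈ M) (c : K) :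
    c • v ∈ M := by
  rw [← hM]; rw [← hM] at hv; exact smul_mem_perp f hsmul hv c

end basics

section lines

lemma self_mem_lineOf (K : Type*) {V : Type*} [DivisionRing K] [AddCommGroup V]
    [Module K V] (v : V) : v ∈ lineOf K v := ⟨1, one_smul K v⟩

lemma zero_mem_lineOf (K : Type*) {V : Type*} [DivisionRing K] [AddCommGroup V]
    [Module K V] (v : V) : (0 : V) ∈ lineOf K v := ⟨0, zero_smul K v⟩

lemma mem_lineOf_iff {v x : V} : x ∈ lineOf K v ↔ ∃ c : K, c • v = x := Iff.rfl

lemma lineOf_eq_of_mem {v w : V} (hw : w ∈ lineOf K v) (h0 : w ≠ 0) :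
    lineOf K w = lineOf K v := by
  rw [mem_lineOf_iff] at hw
  obtain ⟨c, rfl⟩ := hw
  have hc : c ≠ 0 := fun h => h0 (by rw [h, zero_smul])
  ext x
  rw [mem_lineOf_iff, mem_lineOf_iff]
  constructor
  · rintro ⟨d, rfl⟩
    exact ⟨d * c, mul_smul d c v⟩
  · rintro ⟨d, rfl⟩
    exact ⟨d * c⁻¹, by rw [smul_smul, mul_assoc, inv_mul_cancel₀ hc, mul_one]⟩

lemma atom_val_eq {L : Atoms K V} {v : V} (hv : v ∈ L.1) (h0 : v ≠ 0) :
    L.1 = lineOf K v := by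
  obtain ⟨w, hw0, hL⟩ := L.2
  rw [hL] at hv ⊢
  exact (lineOf_eq_of_mem hv h0).symm

lemma atom_exists (L : Atoms K V) : ∃ v ∈ L.1, v ≠ 0 := by
  obtain ⟨w, hw0, hL⟩ := L.2
  exact ⟨w, by rw [hL]; exact self_mem_lineOf K w, hw0⟩

lemma atom_eq_of_mem {L L' : Atoms K V} {w : V} (h : w ∈ L.1) (h' : w ∈ L'.1)
    (h0 : w ≠ 0) : L = L' :=
  Subtype.ext ((atom_val_eq h h0).trans (atom_val_eq h' h0).symm)

lemma atom_eq_of_subset {L L' : Atoms K V} (h : L.1 ⊆ L'.1) : L = L' := by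
  obtain ⟨v, hv, h0⟩ := atom_exists L
  exact atom_eq_of_mem hv (h hv) h0

lemma line_subset_closed (f : V → V → K)
    (hsmul : ∀ (c : K) (u v : V), f (c • u) v = c * f u v)
    {M : Set V} (hM : perpSet f (perpSet f M) = M) {v : V} (hv : v ∈ M) :
    lineOf K v ⊆ M := by
  rintro x ⟨c, rfl⟩
  exact smul_mem_closed f hsmul hM hv c

end lines

/-- The candidate image of `M` under the extension of `ℓ₀`. -/
def Simg (ℓ₀ : Atoms K V ≃ Atoms K V) (M : Set V) : Set V :=
  {v | v = 0 ∨ ∃ L : Atoms K V, L.1 ⊆ M ∧ v ∈ (ℓ₀ L).1}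

lemma Simg_mono {ℓ₀ : Atoms K V ≃ Atoms K V} {M N : Set V} (h : M ⊆ N) :
    Simg ℓ₀ M ⊆ Simg ℓ₀ N := fun v hv =>
  hv.imp id fun ⟨L, h1, h2⟩ => ⟨L, h1.trans h, h2⟩

lemma atom_subset_Simg_iff (ℓ₀ : Atoms K V ≃ Atoms K V) (M : Set V)
    (L' : Atoms K V) : L'.1 ⊆ Simg ℓ₀ M ↔ (ℓ₀.symm L').1 ⊆ M := by
  constructor
  · intro hsub
    obtain ⟨w, hw, hw0⟩ := atom_exists L'
    rcases hsub hw with h | ⟨L, hLM, hwL⟩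
    · exact absurd h hw0
    · have h1 : ℓ₀ L = L' := atom_eq_of_mem hwL hw hw0
      rw [← h1, Equiv.symm_apply_apply]; exact hLM
  · intro hsub v hv
    by_cases h0 : v = 0
    · exact Or.inl h0
    · exact Or.inr ⟨ℓ₀.symm L', hsub, by rw [Equiv.apply_symm_apply]; exact hv⟩

lemma Simg_comp (ℓ₀ ℓ₀' : Atoms K V ≃ Atoms K V) (M : Set V) :
    Simg ℓ₀' (Simg ℓ₀ M) = Simg (ℓ₀.trans ℓ₀') M := by
  ext v
  constructor
  · rintro (rfl | ⟨L', hL', hv⟩)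
    · exact Or.inl rfl
    · have h1 := (atom_subset_Simg_iff ℓ₀ M L').mp hL'
      refine Or.inr ⟨ℓ₀.symm L', h1, ?_⟩
      show v ∈ ((ℓ₀.trans ℓ₀') (ℓ₀.symm L')).1
      rw [Equiv.trans_apply, Equiv.apply_symm_apply]
      exact hv
  · rintro (rfl | ⟨L, hL, hv⟩)
    · exact Or.inl rfl
    · refine Or.inr ⟨ℓ₀ L, (atom_subset_Simg_iff ℓ₀ M (ℓ₀ L)).mpr
        (by rw [Equiv.symm_apply_apply]; exact hL), ?_⟩
      exact hv

lemma Simg_refl (f : V → V → K)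
    (hadd : ∀ u v w : V, f (u + v) w = f u w + f v w)
    (hsmul : ∀ (c : K) (u v : V), f (c • u) v = c * f u v)
    {M : Set V} (hM : perpSet f (perpSet f M) = M) :
    Simg (Equiv.refl (Atoms K V)) M = M := by
  ext v
  constructor
  · rintro (rfl | ⟨L, hL, hv⟩)
    · exact zero_mem_closed f hadd hM
    · exact hL hv
  · intro hv
    by_cases h0 : v = 0
    · exact Or.inl h0
    · exact Or.inr ⟨⟨lineOf K v, v, h0, rfl⟩,
        line_subset_closed f hsmul hM hv, self_mem_lineOf K v⟩

lemma Simg_atom (ℓ₀ : Atoms K V ≃ Atoms K V) (L : Atoms K V) :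
    Simg ℓ₀ L.1 = (ℓ₀ L).1 := by
  ext v
  constructor
  · rintro (rfl | ⟨L'', hsub, hv⟩)
    · obtain ⟨w, hw0, hLw⟩ := (ℓ₀ L).2
      rw [hLw]; exact zero_mem_lineOf K w
    · rwa [atom_eq_of_subset hsub] at hv
  · intro hv
    exact Or.inr ⟨L, subset_rfl, hv⟩

section key
variable (f : V → V → K)

lemma perp_Simg
    (hadd : ∀ u v w : V, f (u + v) w = f u w + f v w)
    (hsmul : ∀ (c : K) (u v : V), f (c • u) v = c * f u v)
    (hherm : ∀ u v : V, star (f u v) = f v u)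
    {ℓ₀ : Atoms K V ≃ Atoms K V} (h : IsOrthoSym f ℓ₀)
    {M : Set V} (hM : perpSet f (perpSet f M) = M) :
    perpSet f (Simg ℓ₀ M) = Simg ℓ₀ (perpSet f M) := by
  ext v
  constructor
  · intro hv
    by_cases h0 : v = 0
    · exact Or.inl h0
    · refine Or.inr ⟨ℓ₀.symm ⟨lineOf K v, v, h0, rfl⟩, ?_, ?_⟩
      · intro w hw m hm
        by_cases hm0 : m = 0
        · rw [hm0]; exact f_zero_right f hadd hherm w
        · have hkey : perpL f (ℓ₀.symm ⟨lineOf K v, v, h0, rfl⟩).1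
              ((⟨lineOf K m, m, hm0, rfl⟩ : Atoms K V)).1 := by
            apply (h _ _).mpr
            rw [Equiv.apply_symm_apply]
            rintro x ⟨c, rfl⟩ y hy
            show f (c • v) y = 0
            rw [hsmul, hv y (Or.inr ⟨⟨lineOf K m, m, hm0, rfl⟩,
              line_subset_closed f hsmul hM hm, hy⟩), mul_zero]
          exact hkey w hw m (self_mem_lineOf K m)
      · rw [Equiv.apply_symm_apply]; exact self_mem_lineOf K v
  · rintro (rfl | ⟨L, hL, hv⟩)
    · exact fun x hx => f_zero_left f hadd x
    · rintro x (rfl | ⟨L', hL', hx⟩)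
      · exact f_zero_right f hadd hherm v
      · have hperp : perpL f L.1 L'.1 := fun a ha b hb => (hL ha) b (hL' hb)
        exact (h L L').mp hperp v hv x hx

lemma Simg_closed
    (hadd : ∀ u v w : V, f (u + v) w = f u w + f v w)
    (hsmul : ∀ (c : K) (u v : V), f (c • u) v = c * f u v)
    (hherm : ∀ u v : V, star (f u v) = f v u)
    {ℓ₀ : Atoms K V ≃ Atoms K V} (h : IsOrthoSym f ℓ₀)
    {M : Set V} (hM : perpSet f (perpSet f M) = M) :
    perpSet f (perpSet f (Simg ℓ₀ M)) = Simg ℓ₀ M := by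
  rw [perp_Simg f hadd hsmul hherm h hM,
    perp_Simg f hadd hsmul hherm h (triple_perp f hherm M), hM]

lemma orthoSym_symm {ℓ₀ : Atoms K V ≃ Atoms K V} (h : IsOrthoSym f ℓ₀) :
    IsOrthoSym f ℓ₀.symm := by
  intro L L'
  have h2 := h (ℓ₀.symm L) (ℓ₀.symm L')
  rw [Equiv.apply_symm_apply, Equiv.apply_symm_apply] at h2
  exact h2.symm

lemma orthoSym_trans {ℓ₀ ℓ₀' : Atoms K V ≃ Atoms K V} (h : IsOrthoSym f ℓ₀)
    (h' : IsOrthoSym f ℓ₀') : IsOrthoSym f (ℓ₀.trans ℓ₀') := fun L L' =>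
  (h L L').trans (h' (ℓ₀ L) (ℓ₀ L'))

/-- The extension of an orthosymmetry to the lattice of closed subspaces. -/
def Ehat
    (hadd : ∀ u v w : V, f (u + v) w = f u w + f v w)
    (hsmul : ∀ (c : K) (u v : V), f (c • u) v = c * f u v)
    (hherm : ∀ u v : V, star (f u v) = f v u)
    (ℓ₀ : Atoms K V ≃ Atoms K V) (h : IsOrthoSym f ℓ₀) :
    ClosedSub f ≃ ClosedSub f where
  toFun M := ⟨Simg ℓ₀ M.1, Simg_closed f hadd hsmul hherm h M.2⟩
  invFun M := ⟨Simg ℓ₀.symm M.1, Simg_closed f hadd hsmul hherm (orthoSym_symm f h) M.2⟩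
  left_inv M := Subtype.ext (by
    show Simg ℓ₀.symm (Simg ℓ₀ M.1) = M.1
    rw [Simg_comp, Equiv.self_trans_symm, Simg_refl f hadd hsmul M.2])
  right_inv M := Subtype.ext (by
    show Simg ℓ₀ (Simg ℓ₀.symm M.1) = M.1
    rw [Simg_comp, Equiv.symm_trans_self, Simg_refl f hadd hsmul M.2])

lemma isSym_Ehat
    (hadd : ∀ u v w : V, f (u + v) w = f u w + f v w)
    (hsmul : ∀ (c : K) (u v : V), f (c • u) v = c * f u v)
    (hherm : ∀ u v : V, star (f u v) = f v u)
    (ℓ₀ : Atoms K V ≃ Atoms K V) (h : IsOrthoSym f ℓ₀) :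
    IsSym f (Ehat f hadd hsmul hherm ℓ₀ h) := by
  constructor
  · intro M N
    constructor
    · intro hs
      exact Simg_mono hs
    · intro hs
      have h2 : Simg ℓ₀.symm (Simg ℓ₀ M.1) ⊆ Simg ℓ₀.symm (Simg ℓ₀ N.1) :=
        Simg_mono hs
      rwa [Simg_comp, Simg_comp, Equiv.self_trans_symm,
        Simg_refl f hadd hsmul M.2, Simg_refl f hadd hsmul N.2] at h2
  · intro M N hMN
    show perpSet f (Simg ℓ₀ M.1) = Simg ℓ₀ N.1
    rw [perp_Simg f hadd hsmul hherm h M.2, hMN]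

lemma zero_closed
    (hadd : ∀ u v w : V, f (u + v) w = f u w + f v w)
    (hherm : ∀ u v : V, star (f u v) = f v u)
    (hdefinite : ∀ v : V, f v v = 0 → v = 0) :
    perpSet f (perpSet f ({0} : Set V)) = {0} := by
  have h1 : perpSet f ({0} : Set V) = Set.univ := by
    ext v
    simp only [Set.mem_univ, iff_true]
    intro x hx
    rw [Set.mem_singleton_iff] at hx
    rw [hx]
    exact f_zero_right f hadd hherm v
  rw [h1]
  ext v
  constructor
  · intro hv
    exact hdefinite v (hv v (Set.mem_univ v))
  · intro hv
    rw [Set.mem_singleton_iff] at hv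
    rw [hv]
    exact fun x _ => f_zero_left f hadd x

lemma sym_fixes_zero
    (hadd : ∀ u v w : V, f (u + v) w = f u w + f v w)
    (ℓ : ClosedSub f ≃ ClosedSub f) (hℓ : IsSym f ℓ)
    (Z : ClosedSub f) (hZ : Z.1 = {0}) : ℓ Z = Z := by
  have h0 : (0 : V) ∈ (ℓ Z).1 := zero_mem_closed f hadd (ℓ Z).2
  have hsub : Z.1 ⊆ (ℓ.symm Z).1 := by
    rw [hZ]
    exact Set.singleton_subset_iff.mpr (zero_mem_closed f hadd (ℓ.symm Z).2)
  have h2 : (ℓ Z).1 ⊆ (ℓ (ℓ.symm Z)).1 := (hℓ.1 Z (ℓ.symm Z)).mp hsub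
  rw [Equiv.apply_symm_apply] at h2
  apply Subtype.ext
  rw [hZ] at h2 ⊢
  exact Set.Subset.antisymm h2 (Set.singleton_subset_iff.mpr h0)

lemma eq_Ehat
    (hadd : ∀ u v w : V, f (u + v) w = f u w + f v w)
    (hsmul : ∀ (c : K) (u v : V), f (c • u) v = c * f u v)
    (hherm : ∀ u v : V, star (f u v) = f v u)
    (hdefinite : ∀ v : V, f v v = 0 → v = 0)
    (hlineclosed : ∀ L : Set V, IsLine K L → perpSet f (perpSet f L) = L)
    (ℓ₀ : Atoms K V ≃ Atoms K V) (h : IsOrthoSym f ℓ₀)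
    (ℓ : ClosedSub f ≃ ClosedSub f) (hℓ : IsSym f ℓ)
    (hag : ∀ L : Atoms K V, (ℓ ⟨L.1, hlineclosed L.1 L.2⟩).1 = (ℓ₀ L).1) :
    ℓ = Ehat f hadd hsmul hherm ℓ₀ h := by
  apply Equiv.ext
  intro M
  apply Subtype.ext
  show (ℓ M).1 = Simg ℓ₀ M.1
  set Z : ClosedSub f := ⟨{0}, zero_closed f hadd hherm hdefinite⟩ with hZdef
  have hℓZ : ℓ Z = Z := sym_fixes_zero f hadd ℓ hℓ Z rfl
  apply Set.Subset.antisymm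
  · intro v hv
    by_cases h0 : v = 0
    · exact Or.inl h0
    · have hvl : lineOf K v ⊆ (ℓ M).1 := line_subset_closed f hsmul (ℓ M).2 hv
      set Lv : ClosedSub f := ⟨lineOf K v, hlineclosed _ ⟨v, h0, rfl⟩⟩ with hLvdef
      set N : ClosedSub f := ℓ.symm Lv with hNdef
      have hNM : N.1 ⊆ M.1 := (hℓ.1 N M).mpr (by
        rw [hNdef, Equiv.apply_symm_apply]; exact hvl)
      have hNne : ∃ w ∈ N.1, w ≠ 0 := by
        by_contra hcon
        push_neg at hcon
        have hNZ : N.1 ⊆ Z.1 := fun w hw => hcon w hw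
        have h3 : (ℓ N).1 ⊆ (ℓ Z).1 := (hℓ.1 N Z).mp hNZ
        rw [hℓZ, hNdef, Equiv.apply_symm_apply] at h3
        exact h0 (h3 (self_mem_lineOf K v))
      obtain ⟨w, hw, hw0⟩ := hNne
      have hLwN : lineOf K w ⊆ N.1 := line_subset_closed f hsmul N.2 hw
      have h1 : (ℓ ⟨lineOf K w, hlineclosed _ ⟨w, hw0, rfl⟩⟩).1 ⊆ (ℓ N).1 :=
        (hℓ.1 _ N).mp hLwN
      rw [hNdef, Equiv.apply_symm_apply] at h1
      have hagw := hag ⟨lineOf K w, w, hw0, rfl⟩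
      rw [hagw] at h1
      have heq : ℓ₀ ⟨lineOf K w, w, hw0, rfl⟩ = ⟨lineOf K v, v, h0, rfl⟩ :=
        atom_eq_of_subset h1
      refine Or.inr ⟨⟨lineOf K w, w, hw0, rfl⟩, hLwN.trans hNM, ?_⟩
      rw [heq]
      exact self_mem_lineOf K v
  · rintro v (rfl | ⟨L, hLM, hvL⟩)
    · exact zero_mem_closed f hadd (ℓ M).2
    · have h1 : (ℓ ⟨L.1, hlineclosed L.1 L.2⟩).1 ⊆ (ℓ M).1 := (hℓ.1 _ M).mp hLM
      rw [hag L] at h1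
      exact h1 hvL

lemma isSym_symm (hherm : ∀ u v : V, star (f u v) = f v u)
    {ℓ : ClosedSub f ≃ ClosedSub f} (hℓ : IsSym f ℓ) : IsSym f ℓ.symm := by
  constructor
  · intro M N
    have h2 := hℓ.1 (ℓ.symm M) (ℓ.symm N)
    rw [Equiv.apply_symm_apply, Equiv.apply_symm_apply] at h2
    exact h2.symm
  · intro M N hMN
    have hPc : perpSet f (perpSet f (perpSet f (ℓ.symm M).1)) =
        perpSet f (ℓ.symm M).1 := triple_perp f hherm _
    have h2 := hℓ.2 (ℓ.symm M) ⟨perpSet f (ℓ.symm M).1, hPc⟩ rfl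
    rw [Equiv.apply_symm_apply, hMN] at h2
    have hP : ℓ ⟨perpSet f (ℓ.symm M).1, hPc⟩ = N := Subtype.ext h2.symm
    have h3 : (⟨perpSet f (ℓ.symm M).1, hPc⟩ : ClosedSub f) = ℓ.symm N := by
      rw [← hP, Equiv.symm_apply_apply]
    exact congrArg Subtype.val h3

lemma sym_maps_atoms
    (hadd : ∀ u v w : V, f (u + v) w = f u w + f v w)
    (hsmul : ∀ (c : K) (u v : V), f (c • u) v = c * f u v)
    (hherm : ∀ u v : V, star (f u v) = f v u)
    (hdefinite : ∀ v : V, f v v = 0 → v = 0)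
    (hlineclosed : ∀ L : Set V, IsLine K L → perpSet f (perpSet f L) = L)
    (ℓ : ClosedSub f ≃ ClosedSub f) (hℓ : IsSym f ℓ) (L : Atoms K V) :
    IsLine K (ℓ ⟨L.1, hlineclosed L.1 L.2⟩).1 := by
  set A : ClosedSub f := ℓ ⟨L.1, hlineclosed L.1 L.2⟩ with hAdef
  set Z : ClosedSub f := ⟨{0}, zero_closed f hadd hherm hdefinite⟩ with hZdef
  have hℓZ : ℓ Z = Z := sym_fixes_zero f hadd ℓ hℓ Z rfl
  have hℓsZ : ℓ.symm Z = Z := (Equiv.symm_apply_eq ℓ).mpr hℓZ.symm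
  obtain ⟨u, hu, hu0⟩ := atom_exists L
  have hAne : ∃ v ∈ A.1, v ≠ 0 := by
    by_contra hcon
    push_neg at hcon
    have hsub : A.1 ⊆ Z.1 := fun w hw => hcon w hw
    have h2 := (hℓ.1 (ℓ.symm A) (ℓ.symm Z)).mpr (by
      rw [Equiv.apply_symm_apply, Equiv.apply_symm_apply]; exact hsub)
    rw [hℓsZ, hAdef, Equiv.symm_apply_apply] at h2
    have := h2 hu
    rw [hZdef] at this
    exact hu0 this
  obtain ⟨v, hv, hv0⟩ := hAne
  refine ⟨v, hv0, ?_⟩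
  have hvl : lineOf K v ⊆ A.1 := line_subset_closed f hsmul A.2 hv
  set Lv : ClosedSub f := ⟨lineOf K v, hlineclosed _ ⟨v, hv0, rfl⟩⟩ with hLvdef
  set N : ClosedSub f := ℓ.symm Lv with hNdef
  have hNL : N.1 ⊆ L.1 := (hℓ.1 N ⟨L.1, hlineclosed L.1 L.2⟩).mpr (by
    rw [hNdef, Equiv.apply_symm_apply]; exact hvl)
  have hNne : ∃ w ∈ N.1, w ≠ 0 := by
    by_contra hcon
    push_neg at hcon
    have hNZ : N.1 ⊆ Z.1 := fun w hw => hcon w hw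
    have h3 : (ℓ N).1 ⊆ (ℓ Z).1 := (hℓ.1 N Z).mp hNZ
    rw [hℓZ, hNdef, Equiv.apply_symm_apply] at h3
    exact hv0 (h3 (self_mem_lineOf K v))
  obtain ⟨w, hw, hw0⟩ := hNne
  have hLN : L.1 ⊆ N.1 := by
    rw [atom_val_eq (hNL hw) hw0]
    exact line_subset_closed f hsmul N.2 hw
  have hNeq : N = ⟨L.1, hlineclosed L.1 L.2⟩ :=
    Subtype.ext (Set.Subset.antisymm hNL hLN)
  have hAv : A = Lv := by
    rw [hAdef, ← hNeq, hNdef, Equiv.apply_symm_apply]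
  rw [hAv]

end key

end Stmt12Aux


/-- In an orthomodular Hermitian space, every orthosymmetry of the atoms
of `L_f(V)` extends uniquely to a symmetry of `L_f(V)`, and the extension map
`ℓ₀ ↦ ℓ̂₀` is a group isomorphism from `Aut_o(At(L_f(V)))` onto `Aut(L_f(V))`. -/
theorem stmt_12 {K V : Type*} [DivisionRing K] [StarRing K]
    [AddCommGroup V] [Module K V]
    (f : V → V → K)
    (hadd : ∀ u v w : V, f (u + v) w = f u w + f v w)
    (hsmul : ∀ (c : K) (u v : V), f (c • u) v = c * f u v)
    (hherm : ∀ u v : V, star (f u v) = f v u)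
    (hdefinite : ∀ v : V, f v v = 0 → v = 0)
    (horthomodular : ∀ M : Set V, perpSet f (perpSet f M) = M →
      ∀ v : V, ∃ m ∈ M, ∃ p ∈ perpSet f M, v = m + p)
    (hlineclosed : ∀ L : Set V, IsLine K L → perpSet f (perpSet f L) = L) :
    ∃ E : (Atoms K V ≃ Atoms K V) → (ClosedSub f ≃ ClosedSub f),
      -- each orthosymmetry extends to a symmetry, uniquely
      (∀ ℓ₀ : Atoms K V ≃ Atoms K V, IsOrthoSym f ℓ₀ →
        IsSym f (E ℓ₀) ∧
        (∀ L : Atoms K V, ((E ℓ₀) ⟨L.1, hlineclosed L.1 L.2⟩).1 = (ℓ₀ L).1) ∧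
        (∀ ℓ : ClosedSub f ≃ ClosedSub f, IsSym f ℓ →
          (∀ L : Atoms K V, (ℓ ⟨L.1, hlineclosed L.1 L.2⟩).1 = (ℓ₀ L).1) →
          ℓ = E ℓ₀)) ∧
      -- the extension map is multiplicative (a group homomorphism)
      (∀ ℓ₀ ℓ₀' : Atoms K V ≃ Atoms K V, IsOrthoSym f ℓ₀ → IsOrthoSym f ℓ₀' →
        E (ℓ₀.trans ℓ₀') = (E ℓ₀).trans (E ℓ₀')) ∧
      -- it is injective and onto the symmetries
      (∀ ℓ₀ ℓ₀' : Atoms K V ≃ Atoms K V, IsOrthoSym f ℓ₀ → IsOrthoSym f ℓ₀' →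
        E ℓ₀ = E ℓ₀' → ℓ₀ = ℓ₀') ∧
      (∀ ℓ : ClosedSub f ≃ ClosedSub f, IsSym f ℓ →
        ∃ ℓ₀ : Atoms K V ≃ Atoms K V, IsOrthoSym f ℓ₀ ∧ E ℓ₀ = ℓ) := by
  classical
  refine ⟨fun ℓ₀ => if h : IsOrthoSym f ℓ₀ then
      Stmt12Aux.Ehat f hadd hsmul hherm ℓ₀ h else Equiv.refl _, ?_, ?_, ?_, ?_⟩
  · intro ℓ₀ h
    simp only [dif_pos h]
    exact ⟨Stmt12Aux.isSym_Ehat f hadd hsmul hherm ℓ₀ h,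
      fun L => Stmt12Aux.Simg_atom ℓ₀ L,
      fun ℓ hℓ hag =>
        Stmt12Aux.eq_Ehat f hadd hsmul hherm hdefinite hlineclosed ℓ₀ h ℓ hℓ hag⟩
  · intro ℓ₀ ℓ₀' h h'
    simp only [dif_pos h, dif_pos h', dif_pos (Stmt12Aux.orthoSym_trans f h h')]
    apply Equiv.ext
    intro M
    apply Subtype.ext
    show Stmt12Aux.Simg (ℓ₀.trans ℓ₀') M.1 = Stmt12Aux.Simg ℓ₀' (Stmt12Aux.Simg ℓ₀ M.1)
    rw [Stmt12Aux.Simg_comp]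
  · intro ℓ₀ ℓ₀' h h' heq
    simp only [dif_pos h, dif_pos h'] at heq
    apply Equiv.ext
    intro L
    have h1 := congrArg (fun e : ClosedSub f ≃ ClosedSub f =>
      (e ⟨L.1, hlineclosed L.1 L.2⟩).1) heq
    have h2 : Stmt12Aux.Simg ℓ₀ L.1 = Stmt12Aux.Simg ℓ₀' L.1 := h1
    rw [Stmt12Aux.Simg_atom, Stmt12Aux.Simg_atom] at h2
    exact Subtype.ext h2
  · intro ℓ hℓ
    let ℓ₀ : Atoms K V ≃ Atoms K V :=
      { toFun := fun L => ⟨(ℓ ⟨L.1, hlineclosed L.1 L.2⟩).1,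
          Stmt12Aux.sym_maps_atoms f hadd hsmul hherm hdefinite hlineclosed ℓ hℓ L⟩
        invFun := fun L => ⟨(ℓ.symm ⟨L.1, hlineclosed L.1 L.2⟩).1,
          Stmt12Aux.sym_maps_atoms f hadd hsmul hherm hdefinite hlineclosed ℓ.symm
            (Stmt12Aux.isSym_symm f hherm hℓ) L⟩
        left_inv := fun L => by
          apply Subtype.ext
          simp only [Subtype.coe_eta, Equiv.symm_apply_apply]
        right_inv := fun L => by
          apply Subtype.ext
          simp only [Subtype.coe_eta, Equiv.apply_symm_apply] }
    have hos : IsOrthoSym f ℓ₀ := by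
      intro L L'
      have hPc : perpSet f (perpSet f (perpSet f L'.1)) = perpSet f L'.1 :=
        Stmt12Aux.triple_perp f hherm _
      have h2 := hℓ.2 ⟨L'.1, hlineclosed L'.1 L'.2⟩ ⟨perpSet f L'.1, hPc⟩ rfl
      have h3 := hℓ.1 ⟨L.1, hlineclosed L.1 L.2⟩ ⟨perpSet f L'.1, hPc⟩
      rw [← h2] at h3
      exact h3
    refine ⟨ℓ₀, hos, ?_⟩
    simp only [dif_pos hos]
    exact (Stmt12Aux.eq_Ehat f hadd hsmul hherm hdefinite hlineclosed ℓ₀ hos ℓ hℓ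
      (fun L => rfl)).symm
end

section
/- Every symmetry ℓ ∈ Aut(L_f(V)) of the lattice of f-closed subspaces extends uniquely to an order-preserving bijection Φ_ℓ of the lattice L(V) of ALL subspaces of V, given by Φ_ℓ(M) = ⋃{ℓ(L) | L ⊆ M, L finite-dimensional}. -/
/-- A subspace `M` of `V` is `f`-closed if `M = M⊥⊥`. -/
def IsClosedSub {K V : Type*} [DivisionRing K] [AddCommGroup V] [Module K V]
    (f : V → V → K) (M : Submodule K V) : Prop :=
  perpSet f (perpSet f (M : Set V)) = (M : Set V)

/-!
Among `f`-closed subspaces the finite-dimensional ones are characterised by the order alone: a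
closed `M` is finite-dimensional iff no strictly increasing sequence of closed subspaces stays
below `M` (the rank bounds such a chain; an infinite-dimensional `M` contains an increasing chain
of finite-dimensional, hence closed, subspaces). So `ℓ` and `ℓ⁻¹` preserve finite dimensionality.
Finite-dimensional subspaces are the compact elements of `L(V)` and every subspace is their
directed supremum, so `Φ_ℓ` is monotone, is inverted by `Φ_{ℓ⁻¹}` and agrees with `ℓ` on closed
subspaces; an order isomorphism preserves suprema, so it is determined by its values on
finite-dimensional subspaces, whence uniqueness.
-/

section FiniteDimensional

variable {K V : Type*} [DivisionRing K] [AddCommGroup V] [Module K V]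
  {p : Submodule K V → Prop} (hp : ∀ L : Submodule K V, Module.Finite K L → p L)
include hp

theorem finite_iff_forall_strictMono_exists_not_le (M : {M // p M}) :
    Module.Finite K M.1 ↔ ∀ c : ℕ → {M // p M}, StrictMono c → ∃ n, ¬ c n ≤ M := by
  constructor
  · intro hM c hc
    by_contra! hle
    have hrank : StrictMono fun n => Module.finrank K (c n).1 := fun m n hmn =>
      have : Module.Finite K (c n).1 := Submodule.finiteDimensional_of_le (hle n)
      Submodule.finrank_lt_finrank_of_lt (hc hmn)
    have hbound := Submodule.finrank_mono (hle (Module.finrank K M.1 + 1))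
    have hgrow := hrank.id_le (Module.finrank K M.1 + 1)
    exact absurd (hgrow.trans hbound) (by simp)
  · intro h
    by_contra hM
    let T := {L : Submodule K V // Module.Finite K L ∧ L ≤ M.1}
    have : Nonempty T := ⟨⟨⊥, inferInstance, bot_le⟩⟩
    have : NoMaxOrder T := by
      refine ⟨fun ⟨L, hL, hLM⟩ => ?_⟩
      have hLM' : L < M.1 := lt_of_le_of_ne hLM (by rintro rfl; exact hM hL)
      obtain ⟨x, hxM, hxL⟩ := SetLike.exists_of_lt hLM'
      refine ⟨⟨L ⊔ Submodule.span K {x}, inferInstance,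
        sup_le hLM (Submodule.span_singleton_le_iff_mem x _ |>.2 hxM)⟩, ?_⟩
      refine Subtype.mk_lt_mk.2 (lt_of_le_of_ne le_sup_left fun hEq => hxL ?_)
      exact hEq ▸ Submodule.mem_sup_right (Submodule.mem_span_singleton_self x)
    obtain ⟨c, hc⟩ := Nat.exists_strictMono T
    obtain ⟨n, hn⟩ := h (fun n => ⟨(c n).1, hp _ (c n).2.1⟩) fun m n hmn => hc hmn
    exact hn (c n).2.2

theorem OrderIso.finite_apply_iff (g : {M // p M} ≃o {M // p M}) (M : {M // p M}) :
    Module.Finite K (g M).1 ↔ Module.Finite K M.1 := by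
  suffices key : ∀ (g : {M // p M} ≃o {M // p M}) (M : {M // p M}),
      Module.Finite K M.1 → Module.Finite K (g M).1 from
    ⟨fun h => g.symm_apply_apply M ▸ key g.symm (g M) h, key g M⟩
  intro g M hM
  rw [finite_iff_forall_strictMono_exists_not_le hp] at hM ⊢
  intro c hc
  obtain ⟨n, hn⟩ := hM (g.symm ∘ c) (g.symm.strictMono.comp hc)
  exact ⟨n, fun h => hn (g.symm_apply_le.2 h)⟩

end FiniteDimensional

section Extension

variable {R V : Type*} [Semiring R] [AddCommMonoid V] [Module R V]

theorem Submodule.iSup_finite_le_eq (M : Submodule R V) :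
    ⨆ L : {L : Submodule R V // Module.Finite R L ∧ L ≤ M}, L.1 = M :=
  le_antisymm (iSup_le fun L => L.2.2) fun x hx =>
    Submodule.mem_iSup_of_mem ⟨Submodule.span R {x}, inferInstance,
      (Submodule.span_singleton_le_iff_mem x M).2 hx⟩ (Submodule.mem_span_singleton_self x)

variable {p : Submodule R V → Prop} (hp : ∀ L : Submodule R V, Module.Finite R L → p L)
  (g : {M // p M} ≃o {M // p M})

def extendFinite (M : Submodule R V) : Submodule R V :=
  ⨆ L : {L : Submodule R V // Module.Finite R L ∧ L ≤ M}, (g ⟨L.1, hp L.1 L.2.1⟩).1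

theorem le_extendFinite {L : {M // p M}} (hL : Module.Finite R L.1) {M : Submodule R V}
    (hLM : L.1 ≤ M) : (g L).1 ≤ extendFinite hp g M :=
  le_iSup_of_le (ι := {L : Submodule R V // Module.Finite R L ∧ L ≤ M}) ⟨L.1, hL, hLM⟩ le_rfl

theorem extendFinite_mono : Monotone (extendFinite hp g) := fun _ _ hMN =>
  iSup_le fun L => le_extendFinite hp g L.2.1 (L.2.2.trans hMN)

theorem directed_extendFinite (M : Submodule R V) :
    Directed (· ≤ ·) fun L : {L : Submodule R V // Module.Finite R L ∧ L ≤ M} =>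
      (g ⟨L.1, hp L.1 L.2.1⟩).1 := by
  rintro ⟨L₁, h₁, hM₁⟩ ⟨L₂, h₂, hM₂⟩
  have hfg := (Module.Finite.iff_fg.1 h₁).sup (Module.Finite.iff_fg.1 h₂)
  exact ⟨⟨L₁ ⊔ L₂, Module.Finite.iff_fg.2 hfg, sup_le hM₁ hM₂⟩,
    g.monotone (show L₁ ≤ L₁ ⊔ L₂ from le_sup_left),
    g.monotone (show L₂ ≤ L₁ ⊔ L₂ from le_sup_right)⟩

theorem coe_extendFinite (M : Submodule R V) :
    (extendFinite hp g M : Set V) =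
      ⋃ L : {L : Submodule R V // Module.Finite R L ∧ L ≤ M},
        ((g ⟨L.1, hp L.1 L.2.1⟩).1 : Set V) :=
  have : Nonempty {L : Submodule R V // Module.Finite R L ∧ L ≤ M} :=
    ⟨⟨⊥, inferInstance, bot_le⟩⟩
  Submodule.coe_iSup_of_directed _ (directed_extendFinite hp g M)

theorem exists_le_of_finite_le_extendFinite {F M : Submodule R V} (hF : Module.Finite R F)
    (hFM : F ≤ extendFinite hp g M) :
    ∃ L : {L : Submodule R V // Module.Finite R L ∧ L ≤ M},
      F ≤ (g ⟨L.1, hp L.1 L.2.1⟩).1 := by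
  have hcompact : IsCompactElement F :=
    (Submodule.fg_iff_compact F).1 (Module.Finite.iff_fg.1 hF)
  obtain ⟨_, ⟨L, rfl⟩, hFL⟩ :=
    (CompleteLattice.isCompactElement_iff_le_of_directed_sSup_le _ F).1 hcompact _
      (Set.range_nonempty_iff_nonempty.2 ⟨⟨⊥, inferInstance, bot_le⟩⟩)
      (directed_extendFinite hp g M).directedOn_range (by rwa [sSup_range])
  exact ⟨L, hFL⟩

theorem eq_extendFinite_of_forall_apply_eq {Φ : Submodule R V ≃o Submodule R V}
    (hΦ : ∀ M : {M // p M}, Φ M.1 = (g M).1) (M : Submodule R V) :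
    Φ M = extendFinite hp g M := by
  conv_lhs => rw [← Submodule.iSup_finite_le_eq M, Φ.map_iSup]
  exact iSup_congr fun L => hΦ ⟨L.1, hp L.1 L.2.1⟩

variable (hg : ∀ M, Module.Finite R (g M).1 ↔ Module.Finite R M.1)
include hg

theorem extendFinite_apply_val (M : {M // p M}) : extendFinite hp g M.1 = (g M).1 := by
  refine le_antisymm (iSup_le fun L => g.monotone (show ⟨L.1, _⟩ ≤ M from L.2.2)) ?_
  conv_lhs => rw [← Submodule.iSup_finite_le_eq (g M).1]
  refine iSup_le fun F => ?_
  have hF : Module.Finite R (g (g.symm ⟨F.1, hp F.1 F.2.1⟩)).1 := by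
    rw [g.apply_symm_apply]; exact F.2.1
  have := le_extendFinite hp g ((hg _).1 hF) (g.symm_apply_le.2 F.2.2)
  rwa [g.apply_symm_apply] at this

theorem extendFinite_symm_extendFinite (M : Submodule R V) :
    extendFinite hp g.symm (extendFinite hp g M) = M := by
  refine le_antisymm (iSup_le fun F => ?_) ?_
  · obtain ⟨L, hFL⟩ := exists_le_of_finite_le_extendFinite hp g F.2.1 F.2.2
    have : g.symm ⟨F.1, hp F.1 F.2.1⟩ ≤ ⟨L.1, hp L.1 L.2.1⟩ := g.symm_apply_le.2 hFL
    exact (Subtype.coe_le_coe.2 this).trans L.2.2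
  · conv_lhs => rw [← Submodule.iSup_finite_le_eq M]
    refine iSup_le fun L => ?_
    have hL : Module.Finite R (g ⟨L.1, hp L.1 L.2.1⟩).1 := (hg _).2 L.2.1
    have := le_extendFinite hp g.symm hL (le_extendFinite hp g L.2.1 L.2.2)
    rwa [g.symm_apply_apply] at this

def extendFiniteOrderIso : Submodule R V ≃o Submodule R V :=
  have hg_symm : ∀ M, Module.Finite R (g.symm M).1 ↔ Module.Finite R M.1 := fun M => by
    rw [← hg, g.apply_symm_apply]
  have left_inv := extendFinite_symm_extendFinite hp g hg
  have right_inv := g.symm_symm ▸ extendFinite_symm_extendFinite hp g.symm hg_symm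
  { toFun := extendFinite hp g
    invFun := extendFinite hp g.symm
    left_inv := left_inv
    right_inv := right_inv
    map_rel_iff' := fun {M N} => ⟨fun h => left_inv M ▸ left_inv N ▸
      extendFinite_mono hp g.symm h, fun h => extendFinite_mono hp g h⟩ }

end Extension

theorem stmt_13_general {K V : Type*} [DivisionRing K]
    [AddCommGroup V] [Module K V]
    (f : V → V → K)
    (hfin : ∀ L : Submodule K V, Module.Finite K L → IsClosedSub f L)
    (ℓ : {M : Submodule K V // IsClosedSub f M} ≃ {M : Submodule K V // IsClosedSub f M})
    (hord : ∀ M N : {M : Submodule K V // IsClosedSub f M},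
      M.1 ≤ N.1 ↔ (ℓ M).1 ≤ (ℓ N).1) :
    ∃ Φ : Submodule K V ≃o Submodule K V,
      (∀ M : {M : Submodule K V // IsClosedSub f M}, Φ M.1 = (ℓ M).1) ∧
      (∀ M : Submodule K V, (Φ M : Set V) =
        ⋃ L : {L : Submodule K V // Module.Finite K L ∧ L ≤ M},
          ((ℓ ⟨L.1, hfin L.1 L.2.1⟩).1 : Set V)) ∧
      (∀ Φ' : Submodule K V ≃o Submodule K V,
        (∀ M : {M : Submodule K V // IsClosedSub f M}, Φ' M.1 = (ℓ M).1) → Φ' = Φ) := by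
  let g : {M // IsClosedSub f M} ≃o {M // IsClosedSub f M} := ⟨ℓ, (hord _ _).symm⟩
  have hg := OrderIso.finite_apply_iff hfin g
  refine ⟨extendFiniteOrderIso hfin g hg, extendFinite_apply_val hfin g hg,
    coe_extendFinite hfin g, fun Φ' hΦ' =>
      DFunLike.ext _ _ (eq_extendFinite_of_forall_apply_eq hfin g hΦ')⟩

/-- Every symmetry `ℓ` of the lattice of `f`-closed subspaces (order- and
`⊥`-preserving bijection) extends uniquely to an order-preserving bijection `Φ` of the
lattice of ALL subspaces of `V`, given by
`Φ(M) = ⋃ {ℓ(L) | L ⊆ M, L finite-dimensional}`. -/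
theorem stmt_13 {K V : Type*} [DivisionRing K] [StarRing K]
    [AddCommGroup V] [Module K V]
    (f : V → V → K)
    (hadd : ∀ u v w : V, f (u + v) w = f u w + f v w)
    (hsmul : ∀ (c : K) (u v : V), f (c • u) v = c * f u v)
    (hherm : ∀ u v : V, star (f u v) = f v u)
    (hdefinite : ∀ v : V, f v v = 0 → v = 0)
    (hfin : ∀ L : Submodule K V, Module.Finite K L → IsClosedSub f L)
    (ℓ : {M : Submodule K V // IsClosedSub f M} ≃ {M : Submodule K V // IsClosedSub f M})
    (hord : ∀ M N : {M : Submodule K V // IsClosedSub f M},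
      M.1 ≤ N.1 ↔ (ℓ M).1 ≤ (ℓ N).1)
    (hperp : ∀ M N : {M : Submodule K V // IsClosedSub f M},
      perpSet f (M.1 : Set V) = (N.1 : Set V) →
      perpSet f ((ℓ M).1 : Set V) = ((ℓ N).1 : Set V)) :
    ∃ Φ : Submodule K V ≃o Submodule K V,
      (∀ M : {M : Submodule K V // IsClosedSub f M}, Φ M.1 = (ℓ M).1) ∧
      (∀ M : Submodule K V, (Φ M : Set V) =
        ⋃ L : {L : Submodule K V // Module.Finite K L ∧ L ≤ M},
          ((ℓ ⟨L.1, hfin L.1 L.2.1⟩).1 : Set V)) ∧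
      (∀ Φ' : Submodule K V ≃o Submodule K V,
        (∀ M : {M : Submodule K V // IsClosedSub f M}, Φ' M.1 = (ℓ M).1) → Φ' = Φ) :=
  stmt_13_general f hfin ℓ hord
end

section
/- Let (V,K,*,f) be an orthomodular Hermitian space and let [x], [y] be mutually orthogonal atoms (lines). If there exist nonzero x' ∈ [x], y' ∈ [y] with f(x',x') = f(y',y'), then there is an orthosymmetry ℓ₀ of the atoms with ℓ₀([x]) = [y], ℓ₀([y]) = [x], and ℓ₀([v]) = [v] for the line [v] spanned by v = x' + y'. -/
/-! The swap is the reflection `v ↦ v - f(v,d) N⁻¹ • d` along `d = x' - y'`, where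
`N = f(x',x') = f(y',y')`. Since `x' ⊥ y'` we have `f(d,d) = 2N`, which makes the reflection an
involutive isometry exchanging `x'` and `y'`; hence it fixes `x' + y'`, and its action on lines is
an orthosymmetry with the required properties. -/

section

variable {K V W : Type*} [DivisionRing K] [AddCommGroup V] [Module K V]
  [AddCommGroup W] [Module K W]

theorem lineOf_smul (v : V) {c : K} (hc : c ≠ 0) : lineOf K (c • v) = lineOf K v := by
  ext w
  constructor
  · rintro ⟨a, rfl⟩
    exact ⟨a * c, mul_smul a c v⟩
  · rintro ⟨a, rfl⟩
    exact ⟨a * c⁻¹, by simp only [smul_smul, inv_mul_cancel_right₀ hc]⟩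

theorem lineOf_eq_of_mem {v w : V} (hw : w ∈ lineOf K v) (hw0 : w ≠ 0) :
    lineOf K v = lineOf K w := by
  obtain ⟨c, rfl⟩ := hw
  exact (lineOf_smul v (left_ne_zero_of_smul hw0)).symm

theorem image_lineOf {F : Type*} [FunLike F V W] [LinearMapClass F K V W] (e : F) (v : V) :
    e '' lineOf K v = lineOf K (e v) := by
  simp only [lineOf, ← Set.range_comp, Function.comp_def, map_smul]

theorem IsLine.image {L : Set V} (hL : IsLine K L) (e : V ≃ₗ[K] W) : IsLine K (e '' L) := by
  obtain ⟨v, hv, rfl⟩ := hL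
  exact ⟨e v, e.map_ne_zero_iff.mpr hv, image_lineOf e v⟩

def lineEquiv (e : V ≃ₗ[K] W) : {L : Set V // IsLine K L} ≃ {L : Set W // IsLine K L} where
  toFun L := ⟨e '' L.1, L.2.image e⟩
  invFun L := ⟨e.symm '' L.1, L.2.image e.symm⟩
  left_inv L := Subtype.ext (e.toEquiv.symm_image_image L.1)
  right_inv L := Subtype.ext (e.toEquiv.image_symm_image L.1)

theorem lineEquiv_apply_val (e : V ≃ₗ[K] W) (L : {L : Set V // IsLine K L}) :
    (lineEquiv e L).1 = e '' L.1 :=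
  rfl

theorem perpL_image_iff (f : V → V → K) (e : V ≃ₗ[K] V) (he : ∀ u v, f (e u) (e v) = f u v)
    (L L' : Set V) : perpL f (e '' L) (e '' L') ↔ perpL f L L' := by
  simp only [perpL, Set.forall_mem_image, he]

section Hermitian

variable [StarRing K]

structure IsHermitianForm (f : V → V → K) : Prop where
  add_left : ∀ u v w, f (u + v) w = f u w + f v w
  smul_left : ∀ (c : K) u v, f (c • u) v = c * f u v
  star_apply : ∀ u v, star (f u v) = f v u

namespace IsHermitianForm

variable {f : V → V → K}

def leftLinear (hf : IsHermitianForm f) (w : V) : V →ₗ[K] K where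
  toFun v := f v w
  map_add' u v := hf.add_left u v w
  map_smul' c v := hf.smul_left c v w

theorem sub_left (hf : IsHermitianForm f) (u v w : V) : f (u - v) w = f u w - f v w :=
  (hf.leftLinear w).map_sub u v

theorem smul_right (hf : IsHermitianForm f) (c : K) (u v : V) :
    f u (c • v) = f u v * star c := by
  rw [← hf.star_apply, hf.smul_left, star_mul, hf.star_apply]

theorem sub_right (hf : IsHermitianForm f) (u v w : V) : f u (v - w) = f u v - f u w := by
  rw [← hf.star_apply, hf.sub_left, star_sub, hf.star_apply, hf.star_apply]

-- `a` plays the role of `2 / f(d,d)`; asking for `f d d * a = 2` instead avoids dividing by `2`.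
def reflection (hf : IsHermitianForm f) (d : V) (a : K) : V →ₗ[K] V where
  toFun v := v - (f v d * a) • d
  map_add' u v := by
    rw [hf.add_left, add_mul, add_smul]
    abel
  map_smul' c v := by
    rw [hf.smul_left, mul_assoc, mul_smul, RingHom.id_apply, smul_sub]

theorem reflection_apply (hf : IsHermitianForm f) (d : V) (a : K) (v : V) :
    hf.reflection d a v = v - (f v d * a) • d :=
  rfl

theorem reflection_reflection (hf : IsHermitianForm f) {d : V} {a : K} (hda : f d d * a = 2)
    (v : V) : hf.reflection d a (hf.reflection d a v) = v := by
  have key : f (hf.reflection d a v) d * a = -(f v d * a) := by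
    rw [reflection_apply, hf.sub_left, hf.smul_left, sub_mul, mul_assoc, hda]
    noncomm_ring
  rw [reflection_apply _ _ _ (hf.reflection d a v), key, neg_smul, sub_neg_eq_add,
    reflection_apply, sub_add_cancel]

theorem reflection_isometry (hf : IsHermitianForm f) {d : V} {a : K} (hda : f d d * a = 2)
    (ha : star a = a) (u v : V) :
    f (hf.reflection d a u) (hf.reflection d a v) = f u v := by
  have hstar : star (f v d * a) = a * f d v := by rw [star_mul, ha, hf.star_apply]
  simp only [reflection_apply, hf.sub_left, hf.sub_right, hf.smul_left, hf.smul_right, hstar]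
  rw [← mul_assoc (f d d), hda]
  noncomm_ring

def reflectionEquiv (hf : IsHermitianForm f) {d : V} {a : K} (hda : f d d * a = 2) :
    V ≃ₗ[K] V :=
  LinearEquiv.ofInvolutive (hf.reflection d a) (hf.reflection_reflection hda)

section Swap

variable {x y : V}

theorem apply_sub_sub_mul_inv (hf : IsHermitianForm f) (hxy : f x y = 0)
    (hnorm : f x x = f y y) (hx : f x x ≠ 0) : f (x - y) (x - y) * (f x x)⁻¹ = 2 := by
  have hyx : f y x = 0 := by rw [← hf.star_apply, hxy, star_zero]
  rw [hf.sub_left, hf.sub_right, hf.sub_right, hxy, hyx, ← hnorm, sub_zero, zero_sub,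
    sub_neg_eq_add, add_mul, mul_inv_cancel₀ hx, one_add_one_eq_two]

theorem reflection_sub_apply_left (hf : IsHermitianForm f) (hxy : f x y = 0) (hx : f x x ≠ 0) :
    hf.reflection (x - y) (f x x)⁻¹ x = y := by
  rw [reflection_apply, hf.sub_right, hxy, sub_zero, mul_inv_cancel₀ hx, one_smul, sub_sub_cancel]

theorem reflection_sub_apply_right (hf : IsHermitianForm f) (hxy : f x y = 0)
    (hnorm : f x x = f y y) (hx : f x x ≠ 0) : hf.reflection (x - y) (f x x)⁻¹ y = x := by
  have hyx : f y x = 0 := by rw [← hf.star_apply, hxy, star_zero]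
  rw [reflection_apply, hf.sub_right, hyx, ← hnorm, zero_sub, neg_mul, mul_inv_cancel₀ hx,
    neg_smul, one_smul, sub_neg_eq_add, add_sub_cancel]

end Swap

end IsHermitianForm

end Hermitian

end

theorem stmt_14_general {K V : Type*} [DivisionRing K] [StarRing K]
    [AddCommGroup V] [Module K V]
    (f : V → V → K)
    (hadd : ∀ u v w : V, f (u + v) w = f u w + f v w)
    (hsmul : ∀ (c : K) (u v : V), f (c • u) v = c * f u v)
    (hherm : ∀ u v : V, star (f u v) = f v u)
    (hdefinite : ∀ v : V, f v v = 0 → v = 0)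
    (x y x' y' : V)
    (hxy : perpL f (lineOf K x) (lineOf K y))
    (hx' : x' ∈ lineOf K x) (hx'0 : x' ≠ 0)
    (hy' : y' ∈ lineOf K y) (hy'0 : y' ≠ 0)
    (hnorm : f x' x' = f y' y') :
    ∃ ℓ₀ : {L : Set V // IsLine K L} ≃ {L : Set V // IsLine K L},
      (∀ L L' : {L : Set V // IsLine K L},
        perpL f L.1 L'.1 ↔ perpL f (ℓ₀ L).1 (ℓ₀ L').1) ∧
      (∀ L : {L : Set V // IsLine K L}, L.1 = lineOf K x → (ℓ₀ L).1 = lineOf K y) ∧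
      (∀ L : {L : Set V // IsLine K L}, L.1 = lineOf K y → (ℓ₀ L).1 = lineOf K x) ∧
      (∀ L : {L : Set V // IsLine K L}, L.1 = lineOf K (x' + y') → ℓ₀ L = L) := by
  have hf : IsHermitianForm f := ⟨hadd, hsmul, hherm⟩
  have hN : f x' x' ≠ 0 := fun h => hx'0 (hdefinite x' h)
  have hx'y' : f x' y' = 0 := hxy x' hx' y' hy'
  have hda := hf.apply_sub_sub_mul_inv hx'y' hnorm hN
  have hstar_inv : star (f x' x')⁻¹ = (f x' x')⁻¹ := by rw [star_inv₀, hf.star_apply]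
  set e := hf.reflectionEquiv hda
  have hex : e x' = y' := hf.reflection_sub_apply_left hx'y' hN
  have hey : e y' = x' := hf.reflection_sub_apply_right hx'y' hnorm hN
  rw [lineOf_eq_of_mem hx' hx'0, lineOf_eq_of_mem hy' hy'0]
  refine ⟨lineEquiv e, fun L L' => ?_, fun L hL => ?_, fun L hL => ?_, fun L hL => ?_⟩
  · rw [lineEquiv_apply_val, lineEquiv_apply_val,
      perpL_image_iff f e (hf.reflection_isometry hda hstar_inv)]
  · rw [lineEquiv_apply_val, hL, image_lineOf, hex]
  · rw [lineEquiv_apply_val, hL, image_lineOf, hey]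
  · rw [Subtype.ext_iff, lineEquiv_apply_val, hL, image_lineOf, map_add, hex, hey, add_comm]

/-- In an orthomodular Hermitian space `(V, K, *, f)`, if `[x]` and `[y]`
are mutually orthogonal atoms and there exist nonzero `x' ∈ [x]`, `y' ∈ [y]` with
`f(x',x') = f(y',y')`, then there is an orthosymmetry of the atoms swapping `[x]` and
`[y]` and fixing the superposition line `[x' + y']`. -/
theorem stmt_14 {K V : Type*} [DivisionRing K] [StarRing K]
    [AddCommGroup V] [Module K V]
    (f : V → V → K)
    (hadd : ∀ u v w : V, f (u + v) w = f u w + f v w)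
    (hsmul : ∀ (c : K) (u v : V), f (c • u) v = c * f u v)
    (hherm : ∀ u v : V, star (f u v) = f v u)
    (hdefinite : ∀ v : V, f v v = 0 → v = 0)
    (horthomodular : ∀ M : Set V, perpSet f (perpSet f M) = M →
      ∀ v : V, ∃ m ∈ M, ∃ p ∈ perpSet f M, v = m + p)
    (x y x' y' : V) (hx : x ≠ 0) (hy : y ≠ 0)
    (hxy : perpL f (lineOf K x) (lineOf K y))
    (hx' : x' ∈ lineOf K x) (hx'0 : x' ≠ 0)
    (hy' : y' ∈ lineOf K y) (hy'0 : y' ≠ 0)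
    (hnorm : f x' x' = f y' y') :
    ∃ ℓ₀ : {L : Set V // IsLine K L} ≃ {L : Set V // IsLine K L},
      (∀ L L' : {L : Set V // IsLine K L},
        perpL f L.1 L'.1 ↔ perpL f (ℓ₀ L).1 (ℓ₀ L').1) ∧
      (∀ L : {L : Set V // IsLine K L}, L.1 = lineOf K x → (ℓ₀ L).1 = lineOf K y) ∧
      (∀ L : {L : Set V // IsLine K L}, L.1 = lineOf K y → (ℓ₀ L).1 = lineOf K x) ∧
      (∀ L : {L : Set V // IsLine K L}, L.1 = lineOf K (x' + y') → ℓ₀ L = L) :=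
  stmt_14_general f hadd hsmul hherm hdefinite x y x' y' hxy hx' hx'0 hy' hy'0 hnorm
end

section
/- Let S: V → V be a bijective g-linear map (g an automorphism of K) preserving orthogonality, with f(Su, Sv) = g(ρ)·g(f(u,v)) for a fixed nonzero central symmetric ρ ∈ K. Suppose S fixes a line [v] (Sv = λv) and maps [x] to [y] (Sx = αy) where x ⊥ y and [v] ≤ [x] ∨ [y]. If f is regular (f(w,w) is central and fixed by all automorphisms of K), then f(αy, αy) = f(λx, λx); in particular there exist x' ∈ [x], y' ∈ [y] with f(x',x') = f(y',y'). -/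
/-- Let `S : V → V` be a bijective `g`-linear orthogonality-preserving map
with `f(Su, Sv) = g(ρ)·g(f(u,v))` for a nonzero central symmetric `ρ ∈ K`. If `S` fixes
the line `[v]` (`Sv = λv`), maps `[x]` to `[y]` (`Sx = αy`) with `x ⊥ y` and
`[v] ≤ [x] ∨ [y]`, and `f` is regular, then `f(αy, αy) = f(λx, λx)`; in particular there
are nonzero `x' ∈ [x]`, `y' ∈ [y]` with `f(x',x') = f(y',y')`. -/
theorem stmt_15 {K V : Type*} [DivisionRing K] [StarRing K]
    [AddCommGroup V] [Module K V]
    (f : V → V → K)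
    (hadd : ∀ u v w : V, f (u + v) w = f u w + f v w)
    (hsmul : ∀ (c : K) (u v : V), f (c • u) v = c * f u v)
    (hherm : ∀ u v : V, star (f u v) = f v u)
    (hdefinite : ∀ v : V, f v v = 0 → v = 0)
    (g : K ≃+* K) (Smap : V → V)
    (hSbij : Function.Bijective Smap)
    (hSadd : ∀ u v : V, Smap (u + v) = Smap u + Smap v)
    (hSsmul : ∀ (μ : K) (v : V), Smap (μ • v) = g μ • Smap v)
    (hSorth : ∀ u w : V, f u w = 0 ↔ f (Smap u) (Smap w) = 0)
    (ρ : K) (hρ0 : ρ ≠ 0) (hρcentral : ∀ c : K, c * ρ = ρ * c) (hρsym : star ρ = ρ)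
    (hform : ∀ u v : V, f (Smap u) (Smap v) = g ρ * g (f u v))
    (x y v : V) (hx : x ≠ 0) (hy : y ≠ 0) (hv : v ≠ 0)
    (hxy : f x y = 0)
    (lam alpha : K) (hSv : Smap v = lam • v) (hSx : Smap x = alpha • y)
    (hvxy : ∃ a b : K, v = a • x + b • y)
    (hreg : ∀ w : V, (∀ c : K, c * f w w = f w w * c) ∧
      ∀ h : K ≃+* K, h (f w w) = f w w) :
    f (alpha • y) (alpha • y) = f (lam • x) (lam • x) ∧
      ∃ x' ∈ lineOf K x, ∃ y' ∈ lineOf K y,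
        x' ≠ 0 ∧ y' ≠ 0 ∧ f x' x' = f y' y' := by
  have hS0 : Smap 0 = 0 := by
    have h := hSsmul 0 0
    simpa using h
  have hlam : lam ≠ 0 := by
    intro h
    apply hv
    apply hSbij.1
    rw [hSv, h, zero_smul, hS0]
  have halpha : alpha ≠ 0 := by
    intro h
    apply hx
    apply hSbij.1
    rw [hSx, h, zero_smul, hS0]
  have hsmul2 : ∀ (c : K) (u w : V), f u (c • w) = f u w * star c := by
    intro c u w
    calc f u (c • w) = star (star (f u (c • w))) := (star_star _).symm
      _ = star (f (c • w) u) := by rw [hherm]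
      _ = star (c * f w u) := by rw [hsmul]
      _ = star (f w u) * star c := star_mul _ _
      _ = f u w * star c := by rw [hherm]
  have hfv0 : f v v ≠ 0 := fun h => hv (hdefinite v h)
  have hA : f (alpha • y) (alpha • y) = g ρ * f x x := by
    rw [← hSx, hform, (hreg x).2 g]
  have hB : (lam * star lam) * f v v = g ρ * f v v := by
    have h1 : f (Smap v) (Smap v) = g ρ * f v v := by rw [hform, (hreg v).2 g]
    rw [hSv, hsmul, hsmul2] at h1
    calc lam * star lam * f v v = lam * (f v v * star lam) := by
          rw [mul_assoc, (hreg v).1 (star lam)]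
      _ = g ρ * f v v := h1
  have hgρ : g ρ = lam * star lam := (mul_right_cancel₀ hfv0 hB).symm
  have main : f (alpha • y) (alpha • y) = f (lam • x) (lam • x) := by
    rw [hA, hgρ, hsmul, hsmul2, mul_assoc, (hreg x).1 (star lam), ← mul_assoc]
  exact ⟨main, lam • x, ⟨lam, rfl⟩, alpha • y, ⟨alpha, rfl⟩,
    smul_ne_zero hlam hx, smul_ne_zero halpha hy, main.symm⟩
end

section
/- In the rational orthomodular space (ℚⁿ, f) with f(q,p) = Σ qᵢpᵢ, for each nonzero v ∈ ℚⁿ the map α_[v](M) = f(v, P_M v)/f(v,v), where P_M is the f-orthogonal projection onto the subspace M, is a finitely additive probability measure on the lattice of subspaces of ℚⁿ whose support is the line [v]: α_[v](M) = 1 iff [v] ⊆ M, and α_[v](M) = 0 iff v ⊥ M. -/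
/-- The natural bilinear form `f(q,p) = Σ qᵢ pᵢ` on `ℚⁿ`. -/
def dotq (n : ℕ) (a b : Fin n → ℚ) : ℚ := ∑ i, a i * b i

lemma dotq_comm (n : ℕ) (a b : Fin n → ℚ) : dotq n a b = dotq n b a := by
  simp [dotq, mul_comm]

lemma dotq_sub_left (n : ℕ) (a b c : Fin n → ℚ) :
    dotq n (a - b) c = dotq n a c - dotq n b c := by
  simp [dotq, sub_mul, Finset.sum_sub_distrib]

lemma dotq_add_left (n : ℕ) (a b c : Fin n → ℚ) :
    dotq n (a + b) c = dotq n a c + dotq n b c := by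
  simp [dotq, add_mul, Finset.sum_add_distrib]

lemma dotq_sub_right (n : ℕ) (a b c : Fin n → ℚ) :
    dotq n a (b - c) = dotq n a b - dotq n a c := by
  rw [dotq_comm, dotq_sub_left, dotq_comm n b a, dotq_comm n c a]

lemma dotq_add_right (n : ℕ) (a b c : Fin n → ℚ) :
    dotq n a (b + c) = dotq n a b + dotq n a c := by
  rw [dotq_comm, dotq_add_left, dotq_comm n b a, dotq_comm n c a]

lemma dotq_self_nonneg (n : ℕ) (a : Fin n → ℚ) : 0 ≤ dotq n a a :=
  Finset.sum_nonneg fun i _ => mul_self_nonneg _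

lemma dotq_self_eq_zero (n : ℕ) (a : Fin n → ℚ) : dotq n a a = 0 ↔ a = 0 := by
  constructor
  · intro h
    funext i
    have := (Finset.sum_eq_zero_iff_of_nonneg (fun i _ => mul_self_nonneg (a i))).1 h i
      (Finset.mem_univ i)
    simpa [mul_self_eq_zero] using this
  · intro h; simp [h, dotq]

/-- In the rational orthomodular space `(ℚⁿ, f)`, for each nonzero
`v ∈ ℚⁿ` the map `α_[v](M) = f(v, P_M v)/f(v,v)` (with `P_M` the `f`-orthogonal
projection onto `M`) is a finitely additive probability measure on the subspace lattice
of `ℚⁿ` whose support is the line `[v]`: `α_[v](M) = 1` iff `[v] ⊆ M`, and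
`α_[v](M) = 0` iff `v ⊥ M`. -/
theorem stmt_16 (n : ℕ) (v : Fin n → ℚ) (hv : v ≠ 0)
    (P : Submodule ℚ (Fin n → ℚ) → ((Fin n → ℚ) →ₗ[ℚ] (Fin n → ℚ)))
    (hmem : ∀ (M : Submodule ℚ (Fin n → ℚ)) (w : Fin n → ℚ), P M w ∈ M)
    (hfix : ∀ (M : Submodule ℚ (Fin n → ℚ)), ∀ m ∈ M, P M m = m)
    (hperp : ∀ (M : Submodule ℚ (Fin n → ℚ)) (w : Fin n → ℚ), ∀ m ∈ M,
      dotq n (w - P M w) m = 0) :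
    (∀ M : Submodule ℚ (Fin n → ℚ),
      0 ≤ dotq n v (P M v) / dotq n v v ∧ dotq n v (P M v) / dotq n v v ≤ 1) ∧
    dotq n v (P ⊤ v) / dotq n v v = 1 ∧
    (∀ M N : Submodule ℚ (Fin n → ℚ), (∀ m ∈ M, ∀ p ∈ N, dotq n m p = 0) →
      dotq n v (P (M ⊔ N) v) / dotq n v v
        = dotq n v (P M v) / dotq n v v + dotq n v (P N v) / dotq n v v) ∧
    (∀ M : Submodule ℚ (Fin n → ℚ), dotq n v (P M v) / dotq n v v = 1 ↔ v ∈ M) ∧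
    (∀ M : Submodule ℚ (Fin n → ℚ),
      dotq n v (P M v) / dotq n v v = 0 ↔ ∀ m ∈ M, dotq n v m = 0) := by
  have hvv : 0 < dotq n v v := by
    rcases lt_or_eq_of_le (dotq_self_nonneg n v) with h | h
    · exact h
    · exact absurd ((dotq_self_eq_zero n v).1 h.symm) hv
  -- key: dotq v (P M v) = ‖P M v‖²
  have key : ∀ M : Submodule ℚ (Fin n → ℚ),
      dotq n v (P M v) = dotq n (P M v) (P M v) := by
    intro M
    have := hperp M v (P M v) (hmem M v)
    rw [dotq_sub_left] at this
    linarith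
  -- decomposition: dotq v v = dotq v (P M v) + ‖v - P M v‖²
  have decomp : ∀ M : Submodule ℚ (Fin n → ℚ),
      dotq n v v = dotq n v (P M v) + dotq n (v - P M v) (v - P M v) := by
    intro M
    have h1 : dotq n (v - P M v) (v - P M v)
        = dotq n v (v - P M v) - dotq n (P M v) (v - P M v) := dotq_sub_left n v (P M v) _
    have h2 : dotq n (v - P M v) (P M v) = 0 := hperp M v (P M v) (hmem M v)
    have h3 : dotq n v (v - P M v) = dotq n (v - P M v) v := dotq_comm n _ _
    have h4 : dotq n (v - P M v) v = dotq n v v - dotq n (P M v) v := dotq_sub_left n v (P M v) v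
    have h5 : dotq n (P M v) (v - P M v) = dotq n (v - P M v) (P M v) := dotq_comm n _ _
    have h6 : dotq n (P M v) v = dotq n v (P M v) := dotq_comm n _ _
    linarith
  -- nonnegativity and ≤ 1
  have hbnd : ∀ M : Submodule ℚ (Fin n → ℚ),
      0 ≤ dotq n v (P M v) / dotq n v v ∧ dotq n v (P M v) / dotq n v v ≤ 1 := by
    intro M
    constructor
    · apply div_nonneg _ hvv.le
      rw [key]; exact dotq_self_nonneg n _
    · rw [div_le_one hvv]
      have := decomp M
      have := dotq_self_nonneg n (v - P M v)
      linarith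
  refine ⟨hbnd, ?_, ?_, ?_, ?_⟩
  · -- α(⊤) = 1
    rw [hfix ⊤ v Submodule.mem_top, div_self hvv.ne']
  · -- additivity
    intro M N horth
    have hW : P M v + P N v ∈ M ⊔ N :=
      Submodule.add_mem_sup (hmem M v) (hmem N v)
    have hperpW : ∀ x ∈ M ⊔ N, dotq n (v - (P M v + P N v)) x = 0 := by
      intro x hx
      rcases Submodule.mem_sup.1 hx with ⟨m, hm, p, hp, rfl⟩
      have e1 : dotq n (v - (P M v + P N v)) (m + p)
          = dotq n (m + p) v - dotq n (m + p) (P M v) - dotq n (m + p) (P N v) := by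
        rw [dotq_comm n _ (m + p), dotq_sub_right, dotq_add_right]; ring
      have e2 : dotq n (m + p) (P M v) = dotq n m (P M v) + dotq n p (P M v) :=
        dotq_add_left n m p _
      have e3 : dotq n (m + p) (P N v) = dotq n m (P N v) + dotq n p (P N v) :=
        dotq_add_left n m p _
      have e4 : dotq n p (P M v) = 0 := by
        rw [dotq_comm]; exact horth (P M v) (hmem M v) p hp
      have e5 : dotq n m (P N v) = 0 := horth m hm (P N v) (hmem N v)
      have e6 : dotq n (v - P M v) m = 0 := hperp M v m hm
      have e7 : dotq n (v - P N v) p = 0 := hperp N v p hp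
      rw [dotq_sub_left] at e6 e7
      have e8 : dotq n m v = dotq n v m := dotq_comm n m v
      have e9 : dotq n p v = dotq n v p := dotq_comm n p v
      have e10 : dotq n m (P M v) = dotq n (P M v) m := dotq_comm n _ _
      have e11 : dotq n p (P N v) = dotq n (P N v) p := dotq_comm n _ _
      have e12 : dotq n (m + p) v = dotq n m v + dotq n p v := dotq_add_left n m p v
      rw [e1, e2, e3, e4, e5, e10, e11, e12]
      linarith
    -- uniqueness of projection onto M ⊔ N
    have huniq : P (M ⊔ N) v = P M v + P N v := by
      set w := P M v + P N v with hw
      have hd : P (M ⊔ N) v - w ∈ M ⊔ N := Submodule.sub_mem _ (hmem _ v) hW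
      have h1 : dotq n (v - P (M ⊔ N) v) (P (M ⊔ N) v - w) = 0 :=
        hperp (M ⊔ N) v _ hd
      have h2 : dotq n (v - w) (P (M ⊔ N) v - w) = 0 := hperpW _ hd
      have h3 : dotq n (P (M ⊔ N) v - w) (P (M ⊔ N) v - w) = 0 := by
        have e : P (M ⊔ N) v - w = (v - w) - (v - P (M ⊔ N) v) := by abel
        calc dotq n (P (M ⊔ N) v - w) (P (M ⊔ N) v - w)
            = dotq n ((v - w) - (v - P (M ⊔ N) v)) (P (M ⊔ N) v - w) := by rw [← e]
          _ = dotq n (v - w) (P (M ⊔ N) v - w)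
              - dotq n (v - P (M ⊔ N) v) (P (M ⊔ N) v - w) := dotq_sub_left n _ _ _
          _ = 0 := by rw [h1, h2, sub_zero]
      have := (dotq_self_eq_zero n _).1 h3
      have := sub_eq_zero.1 this
      exact this
    rw [huniq]
    have : dotq n v (P M v + P N v) = dotq n v (P M v) + dotq n v (P N v) := by
      rw [dotq_comm n v, dotq_add_left, dotq_comm n _ v, dotq_comm n _ v]
    rw [this, add_div]
  · -- α = 1 ↔ v ∈ M
    intro M
    constructor
    · intro h
      rw [div_eq_one_iff_eq hvv.ne'] at h
      have hd := decomp M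
      have h0 : dotq n (v - P M v) (v - P M v) = 0 := by linarith
      have := sub_eq_zero.1 ((dotq_self_eq_zero n _).1 h0)
      rw [this]; exact hmem M v
    · intro h
      rw [hfix M v h, div_self hvv.ne']
  · -- α = 0 ↔ v ⊥ M
    intro M
    rw [div_eq_zero_iff]
    constructor
    · rintro (h | h)
      · intro m hm
        have hPz : P M v = 0 := by
          rw [key] at h
          exact (dotq_self_eq_zero n _).1 h
        have := hperp M v m hm
        rw [hPz, sub_zero] at this
        exact this
      · exact absurd h hvv.ne'
    · intro h
      left
      rw [key]
      have h1 := hperp M v (P M v) (hmem M v)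
      rw [dotq_sub_left] at h1
      have h2 := h (P M v) (hmem M v)
      linarith
end

section
/- Let V be a real vector space and S ⊆ V a convex set that is a base of the proper generating cone K = ⋃_{λ≥0} λS (each nonzero element of K has a unique representation λα, λ>0, α∈S). Then the Minkowski functional p_S of conv(S ∪ −S), p_S(v) = inf{λ>0 | v ∈ λ·conv(S ∪ −S)}, satisfies p_S(v) = inf{e(α)+e(β) | α,β ∈ K, v = α − β}, where e is the strictly positive linear functional with e = 1 on S; in particular p_S(α) = e(α) for all α ∈ K. -/
/-!
A vector `v ∈ r • conv(S ∪ -S)` with `r > 0` is exactly `r • (p α - q β)` with `α, β ∈ S` and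
`p + q = 1`, i.e. a difference `a - b` of cone elements with `e a + e b = r`. So the positive part
of the set of decomposition costs `e a + e b` is the set of admissible dilations in the
Minkowski functional. Since the costs form an upper subset of `[0, ∞)` (add `t • α` to both `a`
and `b`), discarding a possible cost `0` does not change the infimum. For `a ∈ K` the
decomposition `a = a - 0` is optimal, since `e a = e x - e y ≤ e x + e y` whenever `a = x - y`.
-/

open Pointwise Set

namespace Real

theorem csInf_inter_Ioi_of_isUpperSet {B : Set ℝ} {c : ℝ} (hB : IsUpperSet B)
    (hc : ∀ x ∈ B, c ≤ x) : sInf (B ∩ Ioi c) = sInf B := by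
  rcases B.eq_empty_or_nonempty with rfl | ⟨x₀, hx₀⟩
  · simp
  have hbdd : BddBelow B := ⟨c, hc⟩
  have hne : (B ∩ Ioi c).Nonempty :=
    ⟨max x₀ c + 1, hB (by linarith [le_max_left x₀ c]) hx₀,
      mem_Ioi.2 (by linarith [le_max_right x₀ c])⟩
  refine le_antisymm (le_csInf ⟨x₀, hx₀⟩ fun x hx => ?_)
    (csInf_le_csInf hbdd hne inter_subset_left)
  refine le_of_forall_pos_lt_add fun ε hε => ?_
  calc sInf (B ∩ Ioi c) ≤ x + ε / 2 :=
        csInf_le (hbdd.mono inter_subset_left)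
          ⟨hB (by linarith) hx, mem_Ioi.2 (by linarith [hc x hx])⟩
    _ < x + ε := by linarith

end Real

section BaseCone

variable {V : Type*} [AddCommGroup V] [Module ℝ V] {S : Set V} {e : V →ₗ[ℝ] ℝ}

def baseCone (S : Set V) : Set V := {v | ∃ lam : ℝ, 0 ≤ lam ∧ ∃ a ∈ S, v = lam • a}

def decompositionCosts (K : Set V) (e : V →ₗ[ℝ] ℝ) (v : V) : Set ℝ :=
  {r | ∃ a ∈ K, ∃ b ∈ K, v = a - b ∧ r = e a + e b}

theorem smul_mem_baseCone {lam : ℝ} {α : V} (hlam : 0 ≤ lam) (hα : α ∈ S) :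
    lam • α ∈ baseCone S :=
  ⟨lam, hlam, α, hα, rfl⟩

theorem zero_mem_baseCone {α : V} (hα : α ∈ S) : (0 : V) ∈ baseCone S := by
  simpa using smul_mem_baseCone le_rfl hα

theorem nonneg_and_eq_smul_of_mem_baseCone (he1 : ∀ a ∈ S, e a = 1) {v : V}
    (hv : v ∈ baseCone S) : 0 ≤ e v ∧ ∃ α ∈ S, v = e v • α := by
  obtain ⟨lam, hlam, α, hα, rfl⟩ := hv
  have hev : e (lam • α) = lam := by rw [map_smul, he1 α hα, smul_eq_mul, mul_one]
  exact ⟨by rwa [hev], α, hα, by rw [hev]⟩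

theorem add_mem_baseCone (hS : Convex ℝ S) {a b : V} (ha : a ∈ baseCone S)
    (hb : b ∈ baseCone S) : a + b ∈ baseCone S := by
  obtain ⟨la, hla, α, hα, rfl⟩ := ha
  obtain ⟨lb, hlb, β, hβ, rfl⟩ := hb
  rcases (add_nonneg hla hlb).eq_or_lt with hsum | hsum
  · obtain ⟨rfl, rfl⟩ : la = 0 ∧ lb = 0 := ⟨by linarith, by linarith⟩
    simpa using smul_mem_baseCone le_rfl hα
  · refine ⟨la + lb, hsum.le, (la / (la + lb)) • α + (lb / (la + lb)) • β,
      hS hα hβ (by positivity) (by positivity) (by rw [← add_div, div_self hsum.ne']), ?_⟩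
    rw [smul_add, smul_smul, smul_smul, mul_div_cancel₀ _ hsum.ne', mul_div_cancel₀ _ hsum.ne']

theorem Convex.convexHull_union_neg (hS : Convex ℝ S) :
    convexHull ℝ (S ∪ -S) = convexJoin ℝ S (-S) := by
  rcases S.eq_empty_or_nonempty with rfl | hne
  · simp
  · exact hS.convexHull_union hS.neg hne hne.neg

theorem mem_smul_convexHull_union_neg_iff (hS : Convex ℝ S) (he1 : ∀ a ∈ S, e a = 1)
    {r : ℝ} (hr : 0 < r) (v : V) :
    v ∈ r • convexHull ℝ (S ∪ -S) ↔ r ∈ decompositionCosts (baseCone S) e v := by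
  rw [hS.convexHull_union_neg]
  constructor
  · rintro ⟨_, hc, rfl⟩
    obtain ⟨α, hα, β', hβ', p, q, hp, hq, hpq, rfl⟩ := mem_convexJoin.1 hc
    rw [mem_neg] at hβ'
    refine ⟨(r * p) • α, smul_mem_baseCone (by positivity) hα,
      (r * q) • -β', smul_mem_baseCone (by positivity) hβ', by module, ?_⟩
    simp only [map_smul, he1 α hα, he1 _ hβ', smul_eq_mul, mul_one]
    rw [← mul_add, hpq, mul_one]
  · rintro ⟨a, ha, b, hb, rfl, rfl⟩
    obtain ⟨hea, α, hα, haα⟩ := nonneg_and_eq_smul_of_mem_baseCone he1 ha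
    obtain ⟨heb, β, hβ, hbβ⟩ := nonneg_and_eq_smul_of_mem_baseCone he1 hb
    refine ⟨(e a + e b)⁻¹ • (a - b), mem_convexJoin.2 ⟨α, hα, -β, by simpa using hβ,
      e a / (e a + e b), e b / (e a + e b), by positivity, by positivity,
      by rw [← add_div, div_self hr.ne'], ?_⟩, smul_inv_smul₀ hr.ne' _⟩
    rw [haα, hbβ, map_smul, map_smul, he1 α hα, he1 β hβ]
    simp only [smul_eq_mul, mul_one, div_eq_mul_inv]
    module

theorem isUpperSet_decompositionCosts (hS : Convex ℝ S) (he1 : ∀ a ∈ S, e a = 1) (v : V) :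
    IsUpperSet (decompositionCosts (baseCone S) e v) := by
  rintro r t hrt ⟨a, ha, b, hb, rfl, rfl⟩
  obtain ⟨α, hα, -⟩ := (nonneg_and_eq_smul_of_mem_baseCone he1 ha).2
  have hshift : ((t - (e a + e b)) / 2) • α ∈ baseCone S :=
    smul_mem_baseCone (by linarith) hα
  refine ⟨_, add_mem_baseCone hS ha hshift, _, add_mem_baseCone hS hb hshift, by abel, ?_⟩
  rw [map_add, map_add, map_smul, he1 α hα, smul_eq_mul]
  ring

theorem nonneg_of_mem_decompositionCosts (he1 : ∀ a ∈ S, e a = 1) {v : V} {r : ℝ}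
    (hr : r ∈ decompositionCosts (baseCone S) e v) : 0 ≤ r := by
  obtain ⟨a, ha, b, hb, -, rfl⟩ := hr
  linarith [(nonneg_and_eq_smul_of_mem_baseCone he1 ha).1,
    (nonneg_and_eq_smul_of_mem_baseCone he1 hb).1]

theorem sInf_smul_convexHull_union_neg_eq_sInf_decompositionCosts (hS : Convex ℝ S)
    (he1 : ∀ a ∈ S, e a = 1) (v : V) :
    sInf {lam : ℝ | 0 < lam ∧ v ∈ lam • convexHull ℝ (S ∪ -S)}
      = sInf (decompositionCosts (baseCone S) e v) := by
  have hdilations : {lam : ℝ | 0 < lam ∧ v ∈ lam • convexHull ℝ (S ∪ -S)}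
      = decompositionCosts (baseCone S) e v ∩ Ioi 0 := by
    ext r
    simp only [mem_ofPred_eq, mem_inter_iff, mem_Ioi]
    exact ⟨fun ⟨hr, hv⟩ => ⟨(mem_smul_convexHull_union_neg_iff hS he1 hr v).1 hv, hr⟩,
      fun ⟨hv, hr⟩ => ⟨hr, (mem_smul_convexHull_union_neg_iff hS he1 hr v).2 hv⟩⟩
  rw [hdilations, Real.csInf_inter_Ioi_of_isUpperSet (isUpperSet_decompositionCosts hS he1 v)
    fun _ => nonneg_of_mem_decompositionCosts he1]

theorem sInf_decompositionCosts_of_mem_baseCone (he1 : ∀ a ∈ S, e a = 1) {a : V}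
    (ha : a ∈ baseCone S) : sInf (decompositionCosts (baseCone S) e a) = e a := by
  obtain ⟨α, hα, -⟩ := (nonneg_and_eq_smul_of_mem_baseCone he1 ha).2
  refine IsLeast.csInf_eq ⟨⟨a, ha, 0, zero_mem_baseCone hα, by simp, by simp⟩, ?_⟩
  rintro _ ⟨x, -, y, hy, rfl, rfl⟩
  rw [map_sub]
  linarith [(nonneg_and_eq_smul_of_mem_baseCone he1 hy).1]

end BaseCone

theorem stmt_19_general (V : Type*) [AddCommGroup V] [Module ℝ V]
    (S : Set V) (hS : Convex ℝ S)
    (K : Set V) (hK : K = {v | ∃ lam : ℝ, 0 ≤ lam ∧ ∃ a ∈ S, v = lam • a})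
    (e : V →ₗ[ℝ] ℝ)
    (he1 : ∀ a ∈ S, e a = 1) :
    (∀ v : V, sInf {lam : ℝ | 0 < lam ∧ v ∈ lam • (convexHull ℝ (S ∪ -S))}
        = sInf {r : ℝ | ∃ a ∈ K, ∃ b ∈ K, v = a - b ∧ r = e a + e b}) ∧
    ∀ a ∈ K, sInf {lam : ℝ | 0 < lam ∧ a ∈ lam • (convexHull ℝ (S ∪ -S))} = e a := by
  obtain rfl : K = baseCone S := hK
  have hminkowski := sInf_smul_convexHull_union_neg_eq_sInf_decompositionCosts hS he1
  exact ⟨hminkowski, fun a ha =>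
    (hminkowski a).trans (sInf_decompositionCosts_of_mem_baseCone he1 ha)⟩

/-- Let `S` be a convex base of the proper generating cone
`K = ⋃_{λ ≥ 0} λ S` of a real vector space `V`, and `e` the strictly positive linear
functional with `e = 1` on `S`. Then the Minkowski functional `p_S` of
`conv(S ∪ -S)` satisfies `p_S(v) = inf {e(a) + e(b) | a, b ∈ K, v = a - b}`; in
particular `p_S(a) = e(a)` for all `a ∈ K`. -/
theorem stmt_19 (V : Type*) [AddCommGroup V] [Module ℝ V]
    (S : Set V) (hS : Convex ℝ S)
    (K : Set V) (hK : K = {v | ∃ lam : ℝ, 0 ≤ lam ∧ ∃ a ∈ S, v = lam • a})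
    (hproper : ∀ v : V, v ∈ K → -v ∈ K → v = 0)
    (hgen : ∀ v : V, ∃ a ∈ K, ∃ b ∈ K, v = a - b)
    (huniq : ∀ v ∈ K, v ≠ 0 → ∃! p : ℝ × V, 0 < p.1 ∧ p.2 ∈ S ∧ v = p.1 • p.2)
    (e : V →ₗ[ℝ] ℝ)
    (he1 : ∀ a ∈ S, e a = 1)
    (hepos : ∀ v ∈ K, v ≠ 0 → 0 < e v) :
    (∀ v : V, sInf {lam : ℝ | 0 < lam ∧ v ∈ lam • (convexHull ℝ (S ∪ -S))}
        = sInf {r : ℝ | ∃ a ∈ K, ∃ b ∈ K, v = a - b ∧ r = e a + e b}) ∧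
    ∀ a ∈ K, sInf {lam : ℝ | 0 < lam ∧ a ∈ lam • (convexHull ℝ (S ∪ -S))} = e a :=
  stmt_19_general V S hS K hK e he1
end
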